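/- arXiv:2603.03523 — 7 statements merged into one kernel-verified Lean document; each statement's English description precedes it below -/
import Mathlib

section
/- Let Z be a nonempty compact subset of ℝ^d, let σ > 0, and let κ_σ(z,u) = exp(−|z−u|²/(2σ²)) be the Gaussian kernel on Z × Z. If m is a finite signed Borel measure on Z such that ∫_Z κ_σ(z,u) m(du) = 0 for every z ∈ Z, then m = 0. Consequently, for every Borel probability measure μ on Z, the stationary-normalized kernel mean distance D_μ(ν,ν') := sup_{z∈Z} | (∫_Z κ_σ(z,u)(ν−ν')(du)) / (∫_Z κ_σ(z,u) μ(du)) | is a metric on the space of finite signed Borel measures on Z. -/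
open MeasureTheory

/-- Integral of a function against a finite signed measure, via the Jordan
decomposition: `∫ f dν = ∫ f dν⁺ − ∫ f dν⁻`. -/
noncomputable def sintegral {Z : Type*} [MeasurableSpace Z]
    (s : MeasureTheory.SignedMeasure Z) (f : Z → ℝ) : ℝ :=
  (∫ x, f x ∂s.toJordanDecomposition.posPart) -
    ∫ x, f x ∂s.toJordanDecomposition.negPart

/-!
Since `‖z - u‖² = ‖z‖² - 2⟪z, u⟫ + ‖u‖²`, the Gaussian kernel factors as
`w z * exp (⟪z, u⟫ / σ²) * w u` with a positive weight `w`, so finite measures `P`, `Q` with equal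
Gaussian kernel means give measures `w • P`, `w • Q` with equal exponential kernel means. Expanding
the exponential in its power series and integrating against `(w • P - w • Q) ⊗ (w • P - w • Q)`
yields `∑ₙ cⁿ / n! ∑_{|p| = n} (∫ xᵖ d(w • P) - ∫ xᵖ d(w • Q))² = 0`, so all moments agree, and the
polynomials are dense in `C(Z, ℝ)` by Stone–Weierstrass. A signed measure whose kernel mean
vanishes has Jordan parts with equal kernel means, hence is zero. Finally `D_μ ν ν'` is the sup
distance between the continuous functions `z ↦ ∫ κ z u ∂ν / ∫ κ z u ∂μ` and
`z ↦ ∫ κ z u ∂ν' / ∫ κ z u ∂μ`, and this assignment is injective.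
-/

open Real Finset Function
open scoped Nat InnerProductSpace ENNReal

section CompactSpace

variable {X Y : Type*} [TopologicalSpace X] [CompactSpace X] [MeasurableSpace X]

lemma Continuous.integrable_of_compactSpace [OpensMeasurableSpace X] (μ : Measure X)
    [IsFiniteMeasure μ] {f : X → ℝ} (hf : Continuous f) : Integrable f μ :=
  (BoundedContinuousFunction.mkOfCompact ⟨f, hf⟩).integrable μ

lemma hasSum_integral_exp [OpensMeasurableSpace X] (μ : Measure X) [IsFiniteMeasure μ]
    {g : X → ℝ} (hg : Continuous g) :
    HasSum (fun n => ∫ x, g x ^ n / n ! ∂μ) (∫ x, exp (g x) ∂μ) := by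
  obtain ⟨C, hC⟩ := isBounded_iff_forall_norm_le.mp (isCompact_range hg).isBounded
  refine hasSum_integral_of_dominated_convergence (fun n _ => C ^ n / n !)
    (fun n => ((hg.pow n).div_const _).aestronglyMeasurable)
    (fun n => ae_of_all _ fun x => ?_) (ae_of_all _ fun _ => summable_pow_div_factorial C)
    (integrable_const _) (ae_of_all _ fun x => ?_)
  · rw [norm_div, norm_pow, RCLike.norm_natCast]
    gcongr
    exact hC _ (Set.mem_range_self x)
  · rw [exp_eq_exp_ℝ]
    exact NormedSpace.expSeries_div_hasSum_exp (g x)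

variable [BorelSpace X]

noncomputable def ContinuousMap.integralCLM (μ : Measure X) [IsFiniteMeasure μ] :
    C(X, ℝ) →L[ℝ] ℝ :=
  L1.integralCLM.comp (ContinuousMap.toLp 1 μ ℝ)

lemma ContinuousMap.integralCLM_apply (μ : Measure X) [IsFiniteMeasure μ] (f : C(X, ℝ)) :
    integralCLM μ f = ∫ x, f x ∂μ := by
  rw [integralCLM, ContinuousLinearMap.comp_apply, ← L1.integral_def, L1.integral_eq_integral]
  exact integral_congr_ae (ContinuousMap.coeFn_toLp μ f)

lemma continuous_integral_of_continuous_uncurry [TopologicalSpace Y] (μ : Measure X)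
    [IsFiniteMeasure μ] {κ : Y → X → ℝ} (hκ : Continuous (uncurry κ)) :
    Continuous fun y => ∫ x, κ y x ∂μ := by
  convert (ContinuousMap.integralCLM μ).continuous.comp (ContinuousMap.curry ⟨_, hκ⟩).continuous
  simp [ContinuousMap.integralCLM_apply]

end CompactSpace

section SignedMeasure

variable {X : Type*} [MeasurableSpace X]

lemma sintegral_eq_integral_sub_integral {s : SignedMeasure X} {P N : Measure X}
    [IsFiniteMeasure P] [IsFiniteMeasure N] (hs : s = P.toSignedMeasure - N.toSignedMeasure)
    {f : X → ℝ} (hf : ∀ μ : Measure X, IsFiniteMeasure μ → Integrable f μ) :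
    sintegral s f = ∫ x, f x ∂P - ∫ x, f x ∂N := by
  have hJ : s.toJordanDecomposition.posPart + N = P + s.toJordanDecomposition.negPart := by
    rw [← Measure.toSignedMeasure_eq_toSignedMeasure_iff, Measure.toSignedMeasure_add,
      Measure.toSignedMeasure_add, ← sub_eq_sub_iff_add_eq_add, ← hs]
    exact s.toSignedMeasure_toJordanDecomposition
  have := congr_arg (fun μ => ∫ x, f x ∂μ) hJ
  simp only [integral_add_measure (hf _ inferInstance) (hf _ inferInstance)] at this
  rw [sintegral]
  linarith

lemma sintegral_sub (ν ν' : SignedMeasure X) {f : X → ℝ}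
    (hf : ∀ μ : Measure X, IsFiniteMeasure μ → Integrable f μ) :
    sintegral (ν - ν') f = sintegral ν f - sintegral ν' f := by
  let J := ν.toJordanDecomposition
  let J' := ν'.toJordanDecomposition
  have hsub : ν - ν' = (J.posPart + J'.negPart).toSignedMeasure -
      (J.negPart + J'.posPart).toSignedMeasure := by
    conv_lhs => rw [← ν.toSignedMeasure_toJordanDecomposition,
      ← ν'.toSignedMeasure_toJordanDecomposition]
    simp only [JordanDecomposition.toSignedMeasure, Measure.toSignedMeasure_add]
    abel
  rw [sintegral_eq_integral_sub_integral hsub hf,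
    integral_add_measure (hf _ inferInstance) (hf _ inferInstance),
    integral_add_measure (hf _ inferInstance) (hf _ inferInstance), sintegral, sintegral]
  ring

lemma SignedMeasure.eq_zero_of_forall_sintegral_eq_zero {Y : Type*} {κ : Y → X → ℝ}
    (hκ : ∀ P Q : Measure X, IsFiniteMeasure P → IsFiniteMeasure Q →
      (∀ y, ∫ x, κ y x ∂P = ∫ x, κ y x ∂Q) → P = Q)
    {m : SignedMeasure X} (hm : ∀ y, sintegral m (κ y) = 0) : m = 0 := by
  have h := hκ _ _ inferInstance inferInstance fun y => sub_eq_zero.mp (hm y)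
  rw [← m.toSignedMeasure_toJordanDecomposition, JordanDecomposition.toSignedMeasure]
  simp only [h, sub_self]

theorem exists_injective_iSup_abs_sintegral_sub_div_eq_dist [TopologicalSpace X]
    [CompactSpace X] [BorelSpace X] {κ : X → X → ℝ} (hκ : Continuous (uncurry κ))
    (hsep : ∀ m : SignedMeasure X, (∀ z, sintegral m (κ z) = 0) → m = 0)
    {w : X → ℝ} (hw : Continuous w) (hw0 : ∀ z, w z ≠ 0) :
    ∃ F : SignedMeasure X → C(X, ℝ), Injective F ∧
      ∀ ν ν', ⨆ z, |sintegral (ν - ν') (κ z) / w z| = dist (F ν) (F ν') := by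
  have hint (z : X) (μ : Measure X) (_ : IsFiniteMeasure μ) : Integrable (κ z) μ :=
    (hκ.uncurry_left z).integrable_of_compactSpace μ
  have hcont (ν : SignedMeasure X) : Continuous fun z => sintegral ν (κ z) :=
    (continuous_integral_of_continuous_uncurry _ hκ).sub
      (continuous_integral_of_continuous_uncurry _ hκ)
  refine ⟨fun ν => ⟨fun z => sintegral ν (κ z) / w z, (hcont ν).div hw hw0⟩,
    fun ν ν' hνν' => sub_eq_zero.mp (hsep _ fun z => ?_), fun ν ν' => ?_⟩
  · rw [sintegral_sub _ _ (hint z), sub_eq_zero]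
    exact (div_left_inj' (hw0 z)).mp (DFunLike.congr_fun hνν' z)
  · rw [ContinuousMap.dist_eq_iSup]
    refine iSup_congr fun z => ?_
    rw [sintegral_sub _ _ (hint z), sub_div, Real.dist_eq]
    rfl

end SignedMeasure

lemma exp_neg_dist_sq_div_eq_mul_exp_inner_mul {F : Type*} [NormedAddCommGroup F]
    [InnerProductSpace ℝ F] {σ : ℝ} (hσ : σ ≠ 0) (x y : F) :
    exp (-dist x y ^ 2 / (2 * σ ^ 2)) =
      exp (-‖x‖ ^ 2 / (2 * σ ^ 2)) * exp ((σ ^ 2)⁻¹ * ⟪x, y⟫_ℝ) * exp (-‖y‖ ^ 2 / (2 * σ ^ 2)) := by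
  rw [← exp_add, ← exp_add, dist_eq_norm, norm_sub_sq_real]
  congr 1
  field_simp
  ring

section EuclideanSpace

variable {ι : Type*}

def coordMonomial {n : ℕ} (p : Fin n → ι) (x : EuclideanSpace ℝ ι) : ℝ := ∏ j, x (p j)

@[fun_prop]
lemma continuous_coordMonomial {n : ℕ} (p : Fin n → ι) : Continuous (coordMonomial p) := by
  unfold coordMonomial
  fun_prop

variable [Fintype ι]

lemma inner_pow_eq_sum_coordMonomial (x y : EuclideanSpace ℝ ι) (n : ℕ) :
    ⟪x, y⟫_ℝ ^ n = ∑ p : Fin n → ι, coordMonomial p x * coordMonomial p y := by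
  simp only [PiLp.inner_apply, RCLike.inner_apply, conj_trivial, sum_pow', Fintype.piFinset_univ,
    coordMonomial, ← prod_mul_distrib, mul_comm]

variable {Z : Set (EuclideanSpace ℝ ι)} [CompactSpace Z]

theorem measure_eq_of_integral_coordMonomial_eq {P Q : Measure Z} [IsFiniteMeasure P]
    [IsFiniteMeasure Q]
    (h : ∀ n (p : Fin n → ι), ∫ u, coordMonomial p u ∂P = ∫ u, coordMonomial p u ∂Q) :
    P = Q := by
  let coord : ι → C(Z, ℝ) := fun i => ⟨fun u => (u : EuclideanSpace ℝ ι) i, by fun_prop⟩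
  have hmono : ∀ f ∈ Submonoid.closure (Set.range coord),
      ∃ n, ∃ p : Fin n → ι, ∀ u, f u = coordMonomial p u := by
    intro f hf
    induction hf using Submonoid.closure_induction with
    | mem f hf =>
      obtain ⟨i, rfl⟩ := hf
      exact ⟨1, fun _ => i, fun u => by simp [coord, coordMonomial]⟩
    | one => exact ⟨0, Fin.elim0, fun u => by simp [coordMonomial]⟩
    | mul f g _ _ hf hg =>
      obtain ⟨n, p, hp⟩ := hf
      obtain ⟨m, q, hq⟩ := hg
      exact ⟨n + m, Fin.append p q, fun u => by simp [hp, hq, coordMonomial, Fin.prod_univ_add]⟩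
  have hsep : (Algebra.adjoin ℝ (Set.range coord)).SeparatesPoints := by
    intro x y hxy
    obtain ⟨i, hi⟩ : ∃ i, (x : EuclideanSpace ℝ ι) i ≠ (y : EuclideanSpace ℝ ι) i := by
      by_contra! h
      exact hxy (Subtype.ext (PiLp.ext h))
    exact ⟨coord i, ⟨coord i, Algebra.subset_adjoin ⟨i, rfl⟩, rfl⟩, hi⟩
  have hdense : Dense (Submodule.span ℝ (Submonoid.closure (Set.range coord) : Set C(Z, ℝ)) :
      Set C(Z, ℝ)) := by
    rw [← Algebra.adjoin_eq_span, Subalgebra.coe_toSubmodule, dense_iff_closure_eq,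
      ← Subalgebra.topologicalClosure_coe,
      ContinuousMap.subalgebra_topologicalClosure_eq_top_of_separatesPoints _ hsep]
    rfl
  have hint : ContinuousMap.integralCLM P = ContinuousMap.integralCLM Q :=
    ContinuousLinearMap.ext_on hdense fun f hf => by
      obtain ⟨n, p, hp⟩ := hmono f hf
      simp only [ContinuousMap.integralCLM_apply, hp, h n p]
  refine ext_of_forall_integral_eq_of_IsFiniteMeasure fun f => ?_
  simpa [ContinuousMap.integralCLM_apply] using congr($hint f.toContinuousMap)

lemma hasSum_integral_integral_exp_inner (c : ℝ) (A B : Measure Z) [IsFiniteMeasure A]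
    [IsFiniteMeasure B] :
    HasSum (fun n => c ^ n / n ! *
        ∑ p : Fin n → ι, (∫ u, coordMonomial p u ∂A) * ∫ u, coordMonomial p u ∂B)
      (∫ z, ∫ u, exp (c * ⟪(z : EuclideanSpace ℝ ι), u⟫_ℝ) ∂B ∂A) := by
  have hg : Continuous fun x : Z × Z => c * ⟪(x.1 : EuclideanSpace ℝ ι), x.2⟫_ℝ := by fun_prop
  rw [← integral_prod (fun x : Z × Z => exp (c * ⟪(x.1 : EuclideanSpace ℝ ι), x.2⟫_ℝ))
    ((continuous_exp.comp hg).integrable_of_compactSpace _)]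
  convert hasSum_integral_exp (A.prod B) hg using 1
  funext n
  have hterm (x : Z × Z) : (c * ⟪(x.1 : EuclideanSpace ℝ ι), x.2⟫_ℝ) ^ n / n ! =
      ∑ p : Fin n → ι, c ^ n / n ! * (coordMonomial p x.1 * coordMonomial p x.2) := by
    rw [mul_pow, inner_pow_eq_sum_coordMonomial, mul_div_right_comm, mul_sum]
  simp_rw [hterm]
  rw [integral_finsetSum _ fun p _ => Continuous.integrable_of_compactSpace _ (by fun_prop),
    mul_sum]
  refine sum_congr rfl fun p _ => ?_
  rw [integral_const_mul, integral_prod_mul (fun u : Z => coordMonomial p u)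
    (fun u : Z => coordMonomial p u)]

lemma integral_coordMonomial_eq_of_integral_exp_inner_eq {c : ℝ} (hc : 0 < c)
    {P Q : Measure Z} [IsFiniteMeasure P] [IsFiniteMeasure Q]
    (h : ∀ z : Z, ∫ u, exp (c * ⟪(z : EuclideanSpace ℝ ι), u⟫_ℝ) ∂P =
      ∫ u, exp (c * ⟪(z : EuclideanSpace ℝ ι), u⟫_ℝ) ∂Q) (n : ℕ) (p : Fin n → ι) :
    ∫ u, coordMonomial p u ∂P = ∫ u, coordMonomial p u ∂Q := by
  have hT (A : Measure Z) : ∫ z, ∫ u, exp (c * ⟪(z : EuclideanSpace ℝ ι), u⟫_ℝ) ∂P ∂A =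
      ∫ z, ∫ u, exp (c * ⟪(z : EuclideanSpace ℝ ι), u⟫_ℝ) ∂Q ∂A := by
    simp_rw [h]
  have hsum : HasSum (fun n => c ^ n / n ! * ∑ p : Fin n → ι,
      (∫ u, coordMonomial p u ∂P - ∫ u, coordMonomial p u ∂Q) ^ 2) 0 := by
    have := ((hasSum_integral_integral_exp_inner c P P).sub
      (hasSum_integral_integral_exp_inner c P Q)).sub
      ((hasSum_integral_integral_exp_inner c Q P).sub (hasSum_integral_integral_exp_inner c Q Q))
    rw [hT P, hT Q, sub_self, sub_self, sub_self] at this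
    refine this.congr_fun fun m => ?_
    simp only [← mul_sub, ← sum_sub_distrib]
    exact congr_arg _ (sum_congr rfl fun q _ => by ring)
  have hn := congr_fun ((hasSum_zero_iff_of_nonneg fun m => by positivity).mp hsum) n
  rw [Pi.zero_apply, mul_eq_zero, or_iff_right (by positivity),
    sum_eq_zero_iff_of_nonneg fun _ _ => sq_nonneg _] at hn
  exact sub_eq_zero.mp (pow_eq_zero_iff two_ne_zero |>.mp (hn p (mem_univ p)))

theorem measure_eq_of_integral_gaussian_eq {σ : ℝ} (hσ : σ ≠ 0) {P Q : Measure Z}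
    [IsFiniteMeasure P] [IsFiniteMeasure Q]
    (h : ∀ z : Z, ∫ u, exp (-dist z u ^ 2 / (2 * σ ^ 2)) ∂P =
      ∫ u, exp (-dist z u ^ 2 / (2 * σ ^ 2)) ∂Q) :
    P = Q := by
  let w : Z → ℝ≥0∞ := fun u =>
    ENNReal.ofReal (exp (-‖(u : EuclideanSpace ℝ ι)‖ ^ 2 / (2 * σ ^ 2)))
  have hw : Measurable w := by fun_prop
  have hfactor (A : Measure Z) (z : Z) : ∫ u, exp (-dist z u ^ 2 / (2 * σ ^ 2)) ∂A =
      exp (-‖(z : EuclideanSpace ℝ ι)‖ ^ 2 / (2 * σ ^ 2)) *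
        ∫ u, exp ((σ ^ 2)⁻¹ * ⟪(z : EuclideanSpace ℝ ι), u⟫_ℝ) ∂A.withDensity w := by
    rw [integral_withDensity_eq_integral_toReal_smul hw
      (ae_of_all _ fun _ => ENNReal.ofReal_lt_top), ← integral_const_mul]
    refine integral_congr_ae (ae_of_all _ fun u => ?_)
    dsimp only [w]
    rw [ENNReal.toReal_ofReal (exp_pos _).le, smul_eq_mul, Subtype.dist_eq,
      exp_neg_dist_sq_div_eq_mul_exp_inner_mul hσ]
    ring
  have hfin (A : Measure Z) [IsFiniteMeasure A] : IsFiniteMeasure (A.withDensity w) :=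
    isFiniteMeasure_withDensity_ofReal
      ((Continuous.integrable_of_compactSpace A (by fun_prop)).hasFiniteIntegral)
  have hdens : P.withDensity w = Q.withDensity w :=
    measure_eq_of_integral_coordMonomial_eq
      (integral_coordMonomial_eq_of_integral_exp_inner_eq (c := (σ ^ 2)⁻¹) (by positivity)
        fun z => mul_left_cancel₀ (exp_pos _).ne' (by rw [← hfactor, ← hfactor, h]))
  have hw0 : ∀ u, w u ≠ 0 := fun u => ENNReal.ofReal_pos.mpr (exp_pos _) |>.ne'
  rw [← withDensity_inv_same hw (ae_of_all P hw0) (ae_of_all _ fun _ => ENNReal.ofReal_ne_top),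
    hdens, withDensity_inv_same hw (ae_of_all Q hw0) (ae_of_all _ fun _ => ENNReal.ofReal_ne_top)]

end EuclideanSpace

theorem gaussian_kernel_distance_is_metric_general
    {d : ℕ} (Z : Set (EuclideanSpace ℝ (Fin d)))
    (hZc : IsCompact Z)
    (σ : ℝ) (hσ : 0 < σ)
    (κ : ↥Z → ↥Z → ℝ)
    (hκ : ∀ z u : ↥Z, κ z u = Real.exp (-(dist z u) ^ 2 / (2 * σ ^ 2))) :
    (∀ m : SignedMeasure ↥Z, (∀ z : ↥Z, sintegral m (fun u => κ z u) = 0) → m = 0) ∧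
      ∀ μ : Measure ↥Z, IsProbabilityMeasure μ →
        ∀ D : SignedMeasure ↥Z → SignedMeasure ↥Z → ℝ,
          (∀ ν ν', D ν ν' = ⨆ z : ↥Z,
            |sintegral (ν - ν') (fun u => κ z u) / ∫ u, κ z u ∂μ|) →
          ((∀ ν ν', 0 ≤ D ν ν') ∧ (∀ ν ν', D ν ν' = D ν' ν) ∧
            (∀ ν ν' ν'', D ν ν'' ≤ D ν ν' + D ν' ν'') ∧
            (∀ ν ν', D ν ν' = 0 ↔ ν = ν')) := by
  have := isCompact_iff_compactSpace.mp hZc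
  obtain rfl : κ = fun z u => exp (-dist z u ^ 2 / (2 * σ ^ 2)) := funext₂ hκ
  have hκc : Continuous (uncurry fun z u : Z => exp (-dist z u ^ 2 / (2 * σ ^ 2))) := by
    fun_prop
  have hsep (m : SignedMeasure Z) :
      (∀ z, sintegral m (fun u => exp (-dist z u ^ 2 / (2 * σ ^ 2))) = 0) → m = 0 :=
    SignedMeasure.eq_zero_of_forall_sintegral_eq_zero fun _ _ _ _ =>
      measure_eq_of_integral_gaussian_eq hσ.ne'
  refine ⟨hsep, fun μ _ D hD => ?_⟩
  obtain ⟨F, hF, hFD⟩ := exists_injective_iSup_abs_sintegral_sub_div_eq_dist hκc hsep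
    (continuous_integral_of_continuous_uncurry μ hκc)
    fun z => (integral_exp_pos ((hκc.uncurry_left z).integrable_of_compactSpace μ)).ne'
  simp only [hD, hFD]
  exact ⟨fun _ _ => dist_nonneg, fun _ _ => dist_comm _ _, fun _ _ _ => dist_triangle _ _ _,
    fun _ _ => dist_eq_zero.trans hF.eq_iff⟩

/-- For the Gaussian kernel `κ_σ` on a nonempty compact `Z ⊂ ℝ^d`:
any finite signed Borel measure `m` whose kernel embedding vanishes
(`∫ κ_σ(z,·) dm = 0` for all `z ∈ Z`) must be zero; consequently, for every Borel
probability measure `μ` on `Z`, the stationary-normalized kernel mean distance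
`D_μ` is a metric on the space of finite signed Borel measures on `Z`. -/
theorem gaussian_kernel_distance_is_metric
    {d : ℕ} (Z : Set (EuclideanSpace ℝ (Fin d)))
    (hZne : Z.Nonempty) (hZc : IsCompact Z)
    (σ : ℝ) (hσ : 0 < σ)
    (κ : ↥Z → ↥Z → ℝ)
    (hκ : ∀ z u : ↥Z, κ z u = Real.exp (-(dist z u) ^ 2 / (2 * σ ^ 2))) :
    (∀ m : SignedMeasure ↥Z, (∀ z : ↥Z, sintegral m (fun u => κ z u) = 0) → m = 0) ∧
      ∀ μ : Measure ↥Z, IsProbabilityMeasure μ →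
        ∀ D : SignedMeasure ↥Z → SignedMeasure ↥Z → ℝ,
          (∀ ν ν', D ν ν' = ⨆ z : ↥Z,
            |sintegral (ν - ν') (fun u => κ z u) / ∫ u, κ z u ∂μ|) →
          ((∀ ν ν', 0 ≤ D ν ν') ∧ (∀ ν ν', D ν ν' = D ν' ν) ∧
            (∀ ν ν' ν'', D ν ν'' ≤ D ν ν' + D ν' ν'') ∧
            (∀ ν ν', D ν ν' = 0 ↔ ν = ν')) :=
  gaussian_kernel_distance_is_metric_general Z hZc σ hσ κ hκ
end

section
/- Let Z be a nonempty compact metric space and κ : Z × Z → ℝ a continuous function. Let (μ_n)_{n≥0} be a sequence of Borel probability measures on Z and μ a Borel probability measure on Z such that for every z ∈ Z, ∫_Z κ(z,u) μ_n(du) → ∫_Z κ(z,u) μ(du) as n → ∞. Then the convergence is uniform in z: sup_{z∈Z} | ∫_Z κ(z,u) μ_n(du) − ∫_Z κ(z,u) μ(du) | → 0 as n → ∞. -/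
open MeasureTheory Filter Metric

/-! Since `κ` is uniformly continuous on the compact space `Z × Z` and every `μₙ` has mass one,
the kernel means `z ↦ ∫ κ(z,u) dμₙ(u)` form a uniformly equicontinuous family. On a compact
space, pointwise convergence of an equicontinuous family is uniform (Arzelà–Ascoli), and uniform
convergence is convergence of the supremum of the pointwise distances to zero. -/

lemma dist_integral_le_of_forall_dist_le {Y E : Type*} [MeasurableSpace Y]
    [NormedAddCommGroup E] [NormedSpace ℝ E] {ν : Measure Y} [IsProbabilityMeasure ν]
    {f g : Y → E} (hf : Integrable f ν) (hg : Integrable g ν) {C : ℝ}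
    (hfg : ∀ u, dist (f u) (g u) ≤ C) :
    dist (∫ u, f u ∂ν) (∫ u, g u ∂ν) ≤ C := by
  rw [dist_eq_norm, ← integral_sub hf hg]
  simpa using norm_integral_le_of_norm_le_const
    (ae_of_all ν fun u => dist_eq_norm (f u) (g u) ▸ hfg u)

lemma uniformEquicontinuous_integral {X Y E ι : Type*}
    [PseudoMetricSpace X] [CompactSpace X] [PseudoMetricSpace Y] [CompactSpace Y]
    [MeasurableSpace Y] [OpensMeasurableSpace Y] [NormedAddCommGroup E] [NormedSpace ℝ E]
    {κ : X → Y → E} (hκ : Continuous fun p : X × Y => κ p.1 p.2)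
    (ν : ι → Measure Y) [∀ i, IsProbabilityMeasure (ν i)] :
    UniformEquicontinuous fun i x => ∫ u, κ x u ∂ν i := by
  have hκ_unif := CompactSpace.uniformContinuous_of_continuous hκ
  have hκ_int : ∀ x i, Integrable (κ x) (ν i) := fun x i =>
    (hκ.comp (Continuous.prodMk_right x)).integrable_of_hasCompactSupport
      (isClosed_tsupport _).isCompact
  rw [uniformEquicontinuous_iff]
  intro ε hε
  obtain ⟨δ, hδ, hκδ⟩ := Metric.uniformContinuous_iff.mp hκ_unif (ε / 2) (half_pos hε)
  refine ⟨δ, hδ, fun x y hxy i => ?_⟩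
  have hclose : ∀ u, dist (κ x u) (κ y u) ≤ ε / 2 := fun u =>
    (hκδ (a := (x, u)) (b := (y, u)) (by simpa [Prod.dist_eq] using hxy)).le
  exact (dist_integral_le_of_forall_dist_le (hκ_int x i) (hκ_int y i) hclose).trans_lt
    (half_lt_self hε)

lemma TendstoUniformly.tendsto_iSup_dist {ι α β : Type*} [PseudoMetricSpace β]
    {F : ι → α → β} {f : α → β} {l : Filter ι} (h : TendstoUniformly F f l) :
    Tendsto (fun i => ⨆ x, dist (F i x) (f x)) l (nhds 0) := by
  rw [Metric.tendsto_nhds]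
  intro ε hε
  filter_upwards [Metric.tendstoUniformly_iff.mp h (ε / 2) (half_pos hε)] with i hi
  have hsup_le : ⨆ x, dist (F i x) (f x) ≤ ε / 2 :=
    Real.iSup_le (fun x => by rw [dist_comm]; exact (hi x).le) (half_pos hε).le
  rw [Real.dist_0_eq_abs, abs_of_nonneg (Real.iSup_nonneg fun x => dist_nonneg)]
  exact hsup_le.trans_lt (half_lt_self hε)

theorem kernel_mean_pointwise_to_uniform_general
    {Z : Type*} [MetricSpace Z] [CompactSpace Z]
    [MeasurableSpace Z] [BorelSpace Z]
    (κ : Z → Z → ℝ) (hκcont : Continuous fun p : Z × Z => κ p.1 p.2)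
    (μseq : ℕ → Measure Z) (hμseq : ∀ n, IsProbabilityMeasure (μseq n))
    (μ : Measure Z)
    (hpt : ∀ z : Z, Tendsto (fun n => ∫ u, κ z u ∂(μseq n)) atTop
      (nhds (∫ u, κ z u ∂μ))) :
    Tendsto (fun n => ⨆ z : Z, |(∫ u, κ z u ∂(μseq n)) - ∫ u, κ z u ∂μ|)
      atTop (nhds 0) := by
  have hequi := (uniformEquicontinuous_integral hκcont μseq).equicontinuous
  have hunif : TendstoUniformly (fun n z => ∫ u, κ z u ∂(μseq n))
      (fun z => ∫ u, κ z u ∂μ) atTop :=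
    UniformFun.tendsto_iff_tendstoUniformly.mp
      ((hequi.tendsto_uniformFun_iff_pi atTop _).mpr (tendsto_pi_nhds.mpr hpt))
  simpa only [Real.dist_eq] using hunif.tendsto_iSup_dist

/-- If `Z` is a nonempty compact metric space, `κ : Z × Z → ℝ` is
continuous, and the kernel means `∫ κ(z,·) dμ_n` converge to `∫ κ(z,·) dμ`
pointwise in `z`, then the convergence is uniform in `z`:
`sup_{z∈Z} |∫ κ(z,u) μ_n(du) − ∫ κ(z,u) μ(du)| → 0`. -/
theorem kernel_mean_pointwise_to_uniform
    {Z : Type*} [MetricSpace Z] [CompactSpace Z] [Nonempty Z]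
    [MeasurableSpace Z] [BorelSpace Z]
    (κ : Z → Z → ℝ) (hκcont : Continuous fun p : Z × Z => κ p.1 p.2)
    (μseq : ℕ → Measure Z) (hμseq : ∀ n, IsProbabilityMeasure (μseq n))
    (μ : Measure Z) [IsProbabilityMeasure μ]
    (hpt : ∀ z : Z, Tendsto (fun n => ∫ u, κ z u ∂(μseq n)) atTop
      (nhds (∫ u, κ z u ∂μ))) :
    Tendsto (fun n => ⨆ z : Z, |(∫ u, κ z u ∂(μseq n)) - ∫ u, κ z u ∂μ|)
      atTop (nhds 0) :=
  kernel_mean_pointwise_to_uniform_general κ hκcont μseq hμseq μ hpt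
end

section
/- Let γ ∈ (0,1), let μ and μ_b be Borel probability measures on Z, and let ν be a finite signed Borel measure on Z with total variation norm ‖ν‖_TV ≤ 1/(1−γ). Set q = Φ_μ[ν] and q̄ = Φ_{μ_b}[ν]. Then sup_{z∈Z} |q(z) − q̄(z)| ≤ D_{μ_b}(μ, μ_b) / ((1−γ) κ_∧), where D_{μ_b}(μ,μ_b) = sup_{z∈Z} | (∫_Z κ(z,u)(μ−μ_b)(du)) / (∫_Z κ(z,u) μ_b(du)) |. -/
open MeasureTheory

/-- If `‖ν‖_TV ≤ 1/(1−γ)`, `q = Φ_μ[ν]` and `q̄ = Φ_{μ_b}[ν]`, then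
`sup_z |q(z) − q̄(z)| ≤ D_{μ_b}(μ, μ_b) / ((1−γ) κ_∧)`, where
`D_{μ_b}(μ,μ_b) = sup_z |(∫ κ(z,u)(μ−μ_b)(du)) / (∫ κ(z,u) μ_b(du))|`. -/
theorem normalization_change_error_bound
    {Z : Type*} [MetricSpace Z] [CompactSpace Z] [Nonempty Z]
    [MeasurableSpace Z] [BorelSpace Z]
    (κ : Z → Z → ℝ) (hκcont : Continuous fun p : Z × Z => κ p.1 p.2)
    (κmin : ℝ) (hκmin : 0 < κmin) (hκlb : ∀ z u, κmin ≤ κ z u)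
    (hκub : ∀ z u, κ z u ≤ 1)
    (γ : ℝ) (hγ0 : 0 < γ) (hγ1 : γ < 1)
    (μ μb : Measure Z) [IsProbabilityMeasure μ] [IsProbabilityMeasure μb]
    (ν : SignedMeasure Z)
    (hνTV : (ν.totalVariation Set.univ).toReal ≤ 1 / (1 - γ)) :
    ∀ z : Z,
      |sintegral ν (fun u => κ z u) / (∫ u, κ z u ∂μ) -
        sintegral ν (fun u => κ z u) / ∫ u, κ z u ∂μb| ≤
      (⨆ z' : Z, |((∫ u, κ z' u ∂μ) - ∫ u, κ z' u ∂μb) / ∫ u, κ z' u ∂μb|) /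
        ((1 - γ) * κmin) := by
  intro z
  have hγ : (0:ℝ) < 1 - γ := by linarith
  -- continuity and integrability of κ z' ·
  have hcont : ∀ z' : Z, Continuous fun u => κ z' u := fun z' =>
    hκcont.comp (Continuous.prodMk_right z')
  have hint : ∀ (z' : Z) (m : Measure Z) [IsFiniteMeasure m],
      Integrable (fun u => κ z' u) m := fun z' m _ =>
    (hcont z').integrable_of_hasCompactSupport
      (HasCompactSupport.of_compactSpace _)
  -- integral lower/upper bounds against probability measures
  have hlb : ∀ (z' : Z) (m : Measure Z) [IsProbabilityMeasure m],
      κmin ≤ ∫ u, κ z' u ∂m := by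
    intro z' m _
    calc κmin = ∫ _u, κmin ∂m := by simp
    _ ≤ ∫ u, κ z' u ∂m :=
      integral_mono (integrable_const _) (hint z' m) (fun u => hκlb z' u)
  have hub : ∀ (z' : Z) (m : Measure Z) [IsProbabilityMeasure m],
      (∫ u, κ z' u ∂m) ≤ 1 := by
    intro z' m _
    calc (∫ u, κ z' u ∂m) ≤ ∫ _u, (1:ℝ) ∂m :=
      integral_mono (hint z' m) (integrable_const _) (fun u => hκub z' u)
    _ = 1 := by simp
  set A := ∫ u, κ z u ∂μ with hA
  set B := ∫ u, κ z u ∂μb with hB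
  have hA0 : 0 < A := lt_of_lt_of_le hκmin (hlb z μ)
  have hB0 : 0 < B := lt_of_lt_of_le hκmin (hlb z μb)
  set S := sintegral ν (fun u => κ z u) with hS
  -- bound on |S|
  have habs : ∀ u, |κ z u| ≤ 1 := fun u => by
    rw [abs_le]; exact ⟨by linarith [hκlb z u], hκub z u⟩
  have hSbound : |S| ≤ 1 / (1 - γ) := by
    have h1 : ‖∫ x, κ z x ∂ν.toJordanDecomposition.posPart‖ ≤
        1 * (ν.toJordanDecomposition.posPart Set.univ).toReal := by
      refine norm_integral_le_of_norm_le_const ?_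
      filter_upwards with u
      rw [Real.norm_eq_abs]; exact habs u
    have h2 : ‖∫ x, κ z x ∂ν.toJordanDecomposition.negPart‖ ≤
        1 * (ν.toJordanDecomposition.negPart Set.univ).toReal := by
      refine norm_integral_le_of_norm_le_const ?_
      filter_upwards with u
      rw [Real.norm_eq_abs]; exact habs u
    rw [Real.norm_eq_abs] at h1 h2
    have htv : (ν.totalVariation Set.univ).toReal =
        (ν.toJordanDecomposition.posPart Set.univ).toReal +
        (ν.toJordanDecomposition.negPart Set.univ).toReal := by
      rw [SignedMeasure.totalVariation, Measure.add_apply,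
        ENNReal.toReal_add (measure_ne_top _ _) (measure_ne_top _ _)]
    have := abs_sub (∫ x, κ z x ∂ν.toJordanDecomposition.posPart)
      (∫ x, κ z x ∂ν.toJordanDecomposition.negPart)
    simp only [hS, sintegral]
    calc |(∫ x, κ z x ∂ν.toJordanDecomposition.posPart) -
        ∫ x, κ z x ∂ν.toJordanDecomposition.negPart| ≤
        |∫ x, κ z x ∂ν.toJordanDecomposition.posPart| +
        |∫ x, κ z x ∂ν.toJordanDecomposition.negPart| := abs_sub _ _
    _ ≤ (ν.totalVariation Set.univ).toReal := by rw [htv]; linarith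
    _ ≤ 1 / (1 - γ) := hνTV
  -- the supremum D
  set D := ⨆ z' : Z, |((∫ u, κ z' u ∂μ) - ∫ u, κ z' u ∂μb) / ∫ u, κ z' u ∂μb|
    with hD
  have hBdd : BddAbove (Set.range fun z' : Z =>
      |((∫ u, κ z' u ∂μ) - ∫ u, κ z' u ∂μb) / ∫ u, κ z' u ∂μb|) := by
    refine ⟨2 / κmin, ?_⟩
    rintro x ⟨z', rfl⟩
    dsimp only
    have h1 : (0:ℝ) < ∫ u, κ z' u ∂μb := lt_of_lt_of_le hκmin (hlb z' μb)
    rw [abs_div, abs_of_pos h1]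
    refine div_le_div₀ (by positivity) ?_ hκmin (hlb z' μb)
    have := hub z' μ; have := hub z' μb
    have := hlb z' μ; have := hlb z' μb
    rw [abs_sub_le_iff]; constructor <;> linarith
  have hDz : |(A - B) / B| ≤ D := le_ciSup hBdd z
  have hD0 : 0 ≤ D := le_trans (abs_nonneg _) hDz
  -- algebra
  have hkey : S / A - S / B = S * ((B - A) / B) / A := by
    field_simp
  have heq : |S / A - S / B| = |S| * |(A - B) / B| / A := by
    rw [hkey, abs_div, abs_mul, abs_of_pos hA0, abs_div, abs_div,
      abs_sub_comm B A]
  rw [heq]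
  calc |S| * |(A - B) / B| / A ≤ (1 / (1 - γ)) * D / κmin := by
        refine div_le_div₀ (by positivity) ?_ hκmin (hlb z μ)
        exact mul_le_mul hSbound hDz (abs_nonneg _) (by positivity)
  _ = D / ((1 - γ) * κmin) := by
        field_simp
end

section
/- Let (E, ‖·‖) be a real Banach space, γ ∈ (0,1), and T : E → E a γ-contraction (‖T[q] − T[q']‖ ≤ γ‖q − q'‖ for all q, q' ∈ E) with fixed point q* = T[q*]. Let q₀ ∈ E and let q : [0,∞) → E be continuous and satisfy the integral equation q(t) = q₀ + ∫₀ᵗ (T[q(s)] − q(s)) ds (Bochner integral) for all t ≥ 0. Then for all t ≥ 0, ‖q(t) − q*‖ ≤ e^{−(1−γ)t} ‖q₀ − q*‖; i.e., the fixed point q* is globally exponentially stable for the semiflow of the ODE q̇ = T[q] − q. -/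
/-!
Weight the error by `eˢ`: along the flow `q̇ = T q - q`, the function `f s = eˢ • (q s - q*)`
has right derivative `eˢ • (T (q s) - T q*)`, of norm at most `γ ‖f s‖`. Grönwall's inequality
gives `‖f t‖ ≤ e^{γ t} ‖f 0‖`, which is the decay `e^{-(1-γ) t}` once the weight is divided out.
-/

open Set Real

section

variable {E : Type*} [NormedAddCommGroup E] [NormedSpace ℝ E]

theorem hasDerivWithinAt_Ici_of_eq_add_integral [CompleteSpace E] {g q : ℝ → E} {a x : ℝ}
    (hg : ContinuousOn g (Ici a)) (hq : ∀ t, a ≤ t → q t = q a + ∫ s in a..t, g s)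
    (hx : a ≤ x) : HasDerivWithinAt q (g x) (Ici x) x := by
  have hint : IntervalIntegrable g MeasureTheory.volume a x :=
    (hg.mono fun y hy => (uIcc_of_le hx ▸ hy).1).intervalIntegrable
  have hmeas : StronglyMeasurableAtFilter g (nhdsWithin x (Ioi x)) :=
    ⟨Ici a, Filter.mem_of_superset self_mem_nhdsWithin fun y hy => hx.trans (le_of_lt hy),
      hg.aestronglyMeasurable measurableSet_Ici⟩
  have hcont : ContinuousWithinAt g (Ioi x) x :=
    (hg x hx).mono fun y hy => hx.trans (le_of_lt hy)
  exact ((intervalIntegral.integral_hasDerivWithinAt_right hint hmeas hcont).const_add (q a)).congr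
    (fun y hy => hq y (hx.trans hy)) (hq x hx)

theorem norm_sub_le_exp_mul_of_hasDerivWithinAt_sub_self {T : E → E} {γ : ℝ} {p : E}
    (hT : ∀ x, ‖T x - p‖ ≤ γ * ‖x - p‖) {q : ℝ → E} {a b : ℝ} (hab : a ≤ b)
    (hcont : ContinuousOn q (Icc a b))
    (hderiv : ∀ x ∈ Ico a b, HasDerivWithinAt q (T (q x) - q x) (Ici x) x) :
    ‖q b - p‖ ≤ exp (-(1 - γ) * (b - a)) * ‖q a - p‖ := by
  set f : ℝ → E := fun s => exp s • (q s - p)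
  have hf : ContinuousOn f (Icc a b) :=
    continuous_exp.continuousOn.smul (hcont.sub continuousOn_const)
  have hf' : ∀ x ∈ Ico a b, HasDerivWithinAt f (exp x • (T (q x) - p)) (Ici x) x := by
    intro x hx
    convert (hasDerivAt_exp x).hasDerivWithinAt.smul ((hderiv x hx).sub_const p) using 1
    · rfl
    · rw [← smul_add, sub_add_sub_cancel]
  have bound : ∀ x ∈ Ico a b, ‖exp x • (T (q x) - p)‖ ≤ γ * ‖f x‖ + 0 := by
    intro x _
    simp only [f, norm_smul, norm_of_nonneg (exp_pos x).le, add_zero]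
    calc exp x * ‖T (q x) - p‖ ≤ exp x * (γ * ‖q x - p‖) := by gcongr; exact hT _
      _ = γ * (exp x * ‖q x - p‖) := by ring
  have gronwall :=
    norm_le_gronwallBound_of_norm_deriv_right_le hf hf' le_rfl bound b ⟨hab, le_rfl⟩
  simp only [f, gronwallBound_ε0, norm_smul, norm_of_nonneg (exp_pos _).le] at gronwall
  have hweight : exp (-(1 - γ) * (b - a)) * exp b = exp a * exp (γ * (b - a)) := by
    rw [← exp_add, ← exp_add]; ring_nf
  refine le_of_mul_le_mul_right ?_ (exp_pos b)
  calc ‖q b - p‖ * exp b = exp b * ‖q b - p‖ := mul_comm _ _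
    _ ≤ exp a * ‖q a - p‖ * exp (γ * (b - a)) := gronwall
    _ = exp (-(1 - γ) * (b - a)) * ‖q a - p‖ * exp b := by
      rw [mul_right_comm _ _ (exp b), hweight]; ring

end

theorem banach_ode_exponential_stability_general
    {E : Type*} [NormedAddCommGroup E] [NormedSpace ℝ E] [CompleteSpace E]
    (γ : ℝ)
    (T : E → E) (hT : ∀ q q' : E, ‖T q - T q'‖ ≤ γ * ‖q - q'‖)
    (qstar : E) (hfix : T qstar = qstar)
    (q : ℝ → E) (hqcont : ContinuousOn q (Set.Ici (0 : ℝ)))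
    (hq : ∀ t : ℝ, 0 ≤ t → q t = q 0 + ∫ s in (0 : ℝ)..t, (T (q s) - q s)) :
    ∀ t : ℝ, 0 ≤ t →
      ‖q t - qstar‖ ≤ Real.exp (-(1 - γ) * t) * ‖q 0 - qstar‖ := by
  intro t ht
  have hTcont : Continuous T :=
    (LipschitzWith.of_dist_le' fun x y => by simpa only [dist_eq_norm] using hT x y).continuous
  have hderiv : ∀ x ∈ Ico (0 : ℝ) t, HasDerivWithinAt q (T (q x) - q x) (Ici x) x :=
    fun x hx => hasDerivWithinAt_Ici_of_eq_add_integral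
      ((hTcont.comp_continuousOn hqcont).sub hqcont) hq hx.1
  have hfix_contr : ∀ x, ‖T x - qstar‖ ≤ γ * ‖x - qstar‖ := fun x => by
    simpa only [hfix] using hT x qstar
  simpa only [sub_zero] using norm_sub_le_exp_mul_of_hasDerivWithinAt_sub_self hfix_contr ht
    (hqcont.mono Icc_subset_Ici_self) hderiv

/-- global exponential stability of the fixed point, Banach-space
ODE: if `T : E → E` is a `γ`-contraction with fixed point `q*` and
`q(t) = q₀ + ∫₀ᵗ (T[q(s)] − q(s)) ds` (Bochner integral) for all `t ≥ 0`, then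
`‖q(t) − q*‖ ≤ e^{−(1−γ)t} ‖q₀ − q*‖` for all `t ≥ 0`. -/
theorem banach_ode_exponential_stability
    {E : Type*} [NormedAddCommGroup E] [NormedSpace ℝ E] [CompleteSpace E]
    (γ : ℝ) (hγ0 : 0 < γ) (hγ1 : γ < 1)
    (T : E → E) (hT : ∀ q q' : E, ‖T q - T q'‖ ≤ γ * ‖q - q'‖)
    (qstar : E) (hfix : T qstar = qstar)
    (q : ℝ → E) (hqcont : ContinuousOn q (Set.Ici (0 : ℝ)))
    (hq : ∀ t : ℝ, 0 ≤ t → q t = q 0 + ∫ s in (0 : ℝ)..t, (T (q s) - q s)) :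
    ∀ t : ℝ, 0 ≤ t →
      ‖q t - qstar‖ ≤ Real.exp (-(1 - γ) * t) * ‖q 0 - qstar‖ :=
  banach_ode_exponential_stability_general γ T hT qstar hfix q hqcont hq
end

section
/- Let Z ⊂ ℝ^d be nonempty and compact and suppose there exist constants v_∧ ∈ (0,1] and σ_∨ > 0 such that Leb({u ∈ Z : |z−u| ≤ r}) ≥ v_∧ V_d(r) for every z ∈ Z and every r ∈ (0, σ_∨ √d]. Then for every σ ∈ (0, σ_∨], every z ∈ Z, and R := σ√d, one has ∫_{{u ∈ Z : |z−u| ≤ R}} exp(−|z−u|²/(2σ²)) du ≥ v_∧ ∫_{{u ∈ ℝ^d : |u| ≤ R}} exp(−|u|²/(2σ²)) du, where the integrals are with respect to d-dimensional Lebesgue measure. -/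
open MeasureTheory Metric Set

/-!
Both integrands are Gaussians in the distance to the centre, so by the layer-cake formula each
integral is `∫₀^∞` of the measure of its superlevel sets, and at height `t` these are the balls
of radius `ρ(t) = √(-2σ² log t)` cut down to the integration domain. The model side is then
`B(0, min ρ R)` and the `Z` side is `Z ∩ B(z, min ρ R)` (open or closed, which differ by a null
sphere), so the local volume condition at radius `min ρ R ≤ R` compares them at every height.
-/

lemma lt_exp_neg_sq_div_iff {σ t x : ℝ} (hσ : σ ≠ 0) (ht : 0 < t) (hx : 0 ≤ x) :
    t < Real.exp (-x ^ 2 / (2 * σ ^ 2)) ↔ x < Real.sqrt (2 * σ ^ 2 * -Real.log t) := by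
  have h2 : 0 < 2 * σ ^ 2 := by positivity
  rw [← Real.log_lt_iff_lt_exp ht, lt_div_iff₀ h2, Real.lt_sqrt hx]
  constructor <;> intro h <;> linarith

/-- For `t ≥ 1` the radius is `√` of a nonpositive number, i.e. `0`, and both sides are empty. -/
lemma setOf_lt_exp_neg_dist_sq_div {α : Type*} [PseudoMetricSpace α] (x : α) {σ t : ℝ}
    (hσ : σ ≠ 0) (ht : 0 < t) :
    {u | t < Real.exp (-dist x u ^ 2 / (2 * σ ^ 2))} =
      ball x (Real.sqrt (2 * σ ^ 2 * -Real.log t)) := by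
  ext u
  rw [mem_ofPred_eq, lt_exp_neg_sq_div_iff hσ ht dist_nonneg, mem_ball, dist_comm]

lemma setOf_mem_and_dist_le {α : Type*} [PseudoMetricSpace α] (Z : Set α) (z : α) (r : ℝ) :
    {u | u ∈ Z ∧ dist z u ≤ r} = Z ∩ closedBall z r := by
  ext u
  simp [dist_comm]

theorem mul_integral_le_integral_of_meas_lt_le {α β : Type*} [MeasurableSpace α]
    [MeasurableSpace β] {μ : Measure α} {ν : Measure β} {f : α → ℝ} {g : β → ℝ} {c : ℝ}
    (hc : 0 ≤ c) (hf : Integrable f μ) (hf₀ : 0 ≤ᵐ[μ] f) (hg : AEMeasurable g ν)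
    (hg₀ : 0 ≤ᵐ[ν] g)
    (h : ∀ t ∈ Ioi (0 : ℝ), ENNReal.ofReal c * ν {x | t < g x} ≤ μ {x | t < f x}) :
    c * ∫ x, g x ∂ν ≤ ∫ x, f x ∂μ := by
  have hlintegral :
      ENNReal.ofReal c * ∫⁻ x, .ofReal (g x) ∂ν ≤ ∫⁻ x, .ofReal (f x) ∂μ := by
    rw [lintegral_eq_lintegral_meas_lt ν hg₀ hg,
      lintegral_eq_lintegral_meas_lt μ hf₀ hf.aemeasurable]
    exact (lintegral_const_mul_le _ _).trans (setLIntegral_mono' measurableSet_Ioi h)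
  rw [integral_eq_lintegral_of_nonneg_ae hg₀ hg.aestronglyMeasurable,
    integral_eq_lintegral_of_nonneg_ae hf₀ hf.aestronglyMeasurable,
    ← ENNReal.toReal_ofReal hc, ← ENNReal.toReal_mul]
  exact ENNReal.toReal_mono hf.lintegral_lt_top.ne hlintegral

section Haar

variable {E : Type*} [NormedAddCommGroup E] [NormedSpace ℝ E] [MeasurableSpace E]
  [BorelSpace E] [FiniteDimensional ℝ E] (μ : Measure E) [μ.IsAddHaarMeasure]

lemma ball_ae_eq_closedBall [Nontrivial E] (x : E) (r : ℝ) : ball x r =ᵐ[μ] closedBall x r :=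
  ae_eq_of_subset_of_measure_ge ball_subset_closedBall
    (Measure.addHaar_closedBall_eq_addHaar_ball μ x r).le measurableSet_ball.nullMeasurableSet
    measure_closedBall_lt_top.ne

theorem mul_measure_ball_inter_closedBall_le [Nontrivial E] {Z : Set E} {z : E} {c : ENNReal}
    {R : ℝ} (hR : 0 < R)
    (hZ : ∀ r ∈ Ioc 0 R, c * μ (closedBall 0 r) ≤ μ (Z ∩ closedBall z r)) (ρ : ℝ) :
    c * μ (ball 0 ρ ∩ closedBall 0 R) ≤ μ (ball z ρ ∩ (Z ∩ closedBall z R)) := by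
  rcases le_or_gt ρ 0 with hρ | hρ
  · simp [ball_eq_empty.2 hρ]
  rcases le_or_gt ρ R with hρR | hRρ
  · have hball : ball z ρ ∩ (Z ∩ closedBall z R) = Z ∩ ball z ρ := by
      rw [inter_left_comm, inter_eq_left.2 (ball_subset_closedBall.trans
        (closedBall_subset_closedBall hρR)), inter_comm]
    rw [hball, inter_eq_left.2 (ball_subset_closedBall.trans (closedBall_subset_closedBall hρR)),
      measure_congr (ball_ae_eq_closedBall μ 0 ρ),
      measure_congr (ae_eq_set_inter (ae_eq_refl Z) (ball_ae_eq_closedBall μ z ρ))]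
    exact hZ ρ ⟨hρ, hρR⟩
  · rw [inter_eq_right.2 (closedBall_subset_ball hRρ),
      inter_eq_right.2 (inter_subset_right.trans (closedBall_subset_ball hRρ))]
    exact hZ R ⟨hR, le_rfl⟩

theorem mul_setIntegral_exp_neg_sq_le [Nontrivial E] {Z : Set E} {z : E} {c R σ : ℝ}
    (hc : 0 ≤ c) (hR : 0 < R) (hσ : σ ≠ 0)
    (hZ : ∀ r ∈ Ioc 0 R, ENNReal.ofReal c * μ (closedBall 0 r) ≤ μ (Z ∩ closedBall z r)) :
    c * ∫ u in closedBall 0 R, Real.exp (-‖u‖ ^ 2 / (2 * σ ^ 2)) ∂μ ≤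
      ∫ u in Z ∩ closedBall z R, Real.exp (-dist z u ^ 2 / (2 * σ ^ 2)) ∂μ := by
  simp_rw [← dist_zero_left]
  have hcont (x : E) : Continuous fun u => Real.exp (-dist x u ^ 2 / (2 * σ ^ 2)) := by
    fun_prop
  have hpos (x : E) (ν : Measure E) : 0 ≤ᵐ[ν] fun u => Real.exp (-dist x u ^ 2 / (2 * σ ^ 2)) :=
    ae_of_all _ fun _ => (Real.exp_pos _).le
  refine mul_integral_le_integral_of_meas_lt_le hc
    (((hcont z).continuousOn.integrableOn_compact (isCompact_closedBall z R)).mono_set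
      inter_subset_right) (hpos _ _) (hcont 0).aemeasurable (hpos _ _) fun t ht => ?_
  rw [Measure.restrict_apply (measurableSet_lt measurable_const (hcont 0).measurable),
    Measure.restrict_apply (measurableSet_lt measurable_const (hcont z).measurable),
    setOf_lt_exp_neg_dist_sq_div _ hσ ht, setOf_lt_exp_neg_dist_sq_div _ hσ ht]
  exact mul_measure_ball_inter_closedBall_le μ hR hZ _

end Haar

theorem mul_setIntegral_le_of_subsingleton {E : Type*} [NormedAddCommGroup E] [Subsingleton E]
    [MeasurableSpace E] (μ : Measure E) {Z : Set E} {z : E} (hz : z ∈ Z) {c : ℝ} (hc : c ≤ 1)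
    (R σ : ℝ) :
    c * ∫ u in closedBall 0 R, Real.exp (-‖u‖ ^ 2 / (2 * σ ^ 2)) ∂μ ≤
      ∫ u in Z ∩ closedBall z R, Real.exp (-dist z u ^ 2 / (2 * σ ^ 2)) ∂μ := by
  have hZ : Z = univ := eq_univ_of_forall fun u => Subsingleton.elim z u ▸ hz
  have hball : closedBall z R = closedBall 0 R := by rw [Subsingleton.elim z 0]
  have hdist (u : E) : dist z u = ‖u‖ := by
    rw [Subsingleton.elim z u, dist_self, Subsingleton.elim u 0, norm_zero]
  rw [hZ, univ_inter, hball]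
  simp_rw [hdist]
  exact mul_le_of_le_one_left (integral_nonneg fun _ => (Real.exp_pos _).le) hc

lemma EuclideanSpace.volume_closedBall_fin {d : ℕ} [NeZero d] (x : EuclideanSpace ℝ (Fin d))
    {r : ℝ} (hr : 0 ≤ r) :
    volume (closedBall x r) =
      ENNReal.ofReal (Real.pi ^ ((d : ℝ) / 2) * r ^ d / Real.Gamma ((d : ℝ) / 2 + 1)) := by
  rw [EuclideanSpace.volume_closedBall, Fintype.card_fin, ← ENNReal.ofReal_pow hr,
    ← ENNReal.ofReal_mul (pow_nonneg hr _), Real.rpow_div_two_eq_sqrt _ Real.pi_pos.le,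
    Real.rpow_natCast]
  ring_nf

theorem local_gaussian_mass_lower_bound_general
    {d : ℕ} (Z : Set (EuclideanSpace ℝ (Fin d)))
    (vmin σmax : ℝ) (hv0 : 0 < vmin) (hv1 : vmin ≤ 1)
    (hvol : ∀ z ∈ Z, ∀ r : ℝ, 0 < r → r ≤ σmax * Real.sqrt d →
      ENNReal.ofReal (vmin *
          (Real.pi ^ ((d : ℝ) / 2) * r ^ (d : ℕ) / Real.Gamma ((d : ℝ) / 2 + 1))) ≤
        volume {u : EuclideanSpace ℝ (Fin d) | u ∈ Z ∧ dist z u ≤ r}) :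
    ∀ σ : ℝ, 0 < σ → σ ≤ σmax → ∀ z ∈ Z,
      vmin * ∫ u in {u : EuclideanSpace ℝ (Fin d) | ‖u‖ ≤ σ * Real.sqrt d},
          Real.exp (-‖u‖ ^ 2 / (2 * σ ^ 2)) ≤
      ∫ u in {u : EuclideanSpace ℝ (Fin d) | u ∈ Z ∧ dist z u ≤ σ * Real.sqrt d},
          Real.exp (-dist z u ^ 2 / (2 * σ ^ 2)) := by
  intro σ hσ hσle z hz
  have hball : {u : EuclideanSpace ℝ (Fin d) | ‖u‖ ≤ σ * Real.sqrt d} =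
      closedBall 0 (σ * Real.sqrt d) := by
    ext u
    simp
  rw [hball, setOf_mem_and_dist_le]
  rcases d.eq_zero_or_pos with rfl | hd
  · exact mul_setIntegral_le_of_subsingleton volume hz hv1 _ σ
  have : NeZero d := ⟨hd.ne'⟩
  refine mul_setIntegral_exp_neg_sq_le volume hv0.le
    (mul_pos hσ (Real.sqrt_pos.2 (Nat.cast_pos.2 hd))) hσ.ne' fun r hr => ?_
  rw [EuclideanSpace.volume_closedBall_fin 0 hr.1.le, ← ENNReal.ofReal_mul hv0.le,
    ← setOf_mem_and_dist_le]
  exact hvol z hz r hr.1 (hr.2.trans (by gcongr))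

/-- layer-cake volume comparison: under the uniform local volume
condition on `Z ⊂ ℝ^d`, for every `σ ∈ (0, σ_∨]`, `z ∈ Z` and `R = σ√d`,
`∫_{u∈Z, |z−u|≤R} e^{−|z−u|²/(2σ²)} du ≥ v_∧ ∫_{|u|≤R} e^{−|u|²/(2σ²)} du`. -/
theorem local_gaussian_mass_lower_bound
    {d : ℕ} (Z : Set (EuclideanSpace ℝ (Fin d)))
    (hZne : Z.Nonempty) (hZc : IsCompact Z)
    (vmin σmax : ℝ) (hv0 : 0 < vmin) (hv1 : vmin ≤ 1) (hσmax : 0 < σmax)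
    (hvol : ∀ z ∈ Z, ∀ r : ℝ, 0 < r → r ≤ σmax * Real.sqrt d →
      ENNReal.ofReal (vmin *
          (Real.pi ^ ((d : ℝ) / 2) * r ^ (d : ℕ) / Real.Gamma ((d : ℝ) / 2 + 1))) ≤
        volume {u : EuclideanSpace ℝ (Fin d) | u ∈ Z ∧ dist z u ≤ r}) :
    ∀ σ : ℝ, 0 < σ → σ ≤ σmax → ∀ z ∈ Z,
      vmin * ∫ u in {u : EuclideanSpace ℝ (Fin d) | ‖u‖ ≤ σ * Real.sqrt d},
          Real.exp (-‖u‖ ^ 2 / (2 * σ ^ 2)) ≤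
      ∫ u in {u : EuclideanSpace ℝ (Fin d) | u ∈ Z ∧ dist z u ≤ σ * Real.sqrt d},
          Real.exp (-dist z u ^ 2 / (2 * σ ^ 2)) :=
  local_gaussian_mass_lower_bound_general Z vmin σmax hv0 hv1 hvol
end

section
/- Let d ≥ 1 and let G be a standard Gaussian random vector in ℝ^d (G ~ N(0, I_d)). Then P(|G|² ≤ d) ≥ 1/2; equivalently, the median of the chi-squared distribution with d degrees of freedom is at most d, and for every σ > 0, ∫_{{u ∈ ℝ^d : |u| ≤ σ√d}} exp(−|u|²/(2σ²)) du ≥ (1/2)(2π)^{d/2} σ^d. -/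
/-!
In polar coordinates the ball of radius `R = σ √d` and its complement carry the radial density
`r ^ (d - 1) * exp (-r ^ 2 / (2 σ ^ 2))` on `(0, R]` and on `(R, ∞)`. The inversion `u ↦ R ^ 2 / u`
maps `(0, R)` onto `(R, ∞)`, and with `s = R ^ 2 / u ^ 2 ≥ 1` the transported density is at most
the original one because `s ^ d ≤ exp (d (s - s⁻¹) / 2)`, i.e. `log s ≤ sinh (log s)`. So the ball
carries at least half of the total mass `(2π) ^ (d / 2) σ ^ d`.
-/

open MeasureTheory Real Set Metric Module

theorem Real.log_le_half_sub_inv {s : ℝ} (hs : 1 ≤ s) : log s ≤ (s - s⁻¹) / 2 := by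
  rw [← sinh_log (by linarith)]
  exact self_le_sinh_iff.mpr (log_nonneg hs)

theorem Real.pow_le_exp_mul_half_sub_inv (m : ℕ) {s : ℝ} (hs : 1 ≤ s) :
    s ^ m ≤ exp (m * ((s - s⁻¹) / 2)) := by
  calc s ^ m = exp (m * log s) := by rw [← log_pow, exp_log (by positivity)]
    _ ≤ _ := by gcongr; exact log_le_half_sub_inv hs

theorem radial_gaussian_inversion_le (n : ℕ) {σ R u : ℝ} (hR : R ^ 2 = (n + 1) * σ ^ 2)
    (hu : 0 < u) (huR : u ≤ R) :
    R ^ 2 / u ^ 2 * ((R ^ 2 / u) ^ n * exp (-(R ^ 2 / u) ^ 2 / (2 * σ ^ 2))) ≤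
      u ^ n * exp (-u ^ 2 / (2 * σ ^ 2)) := by
  set s := R ^ 2 / u ^ 2 with hs_def
  have hs : 1 ≤ s := (one_le_div (by positivity)).mpr (by gcongr)
  have hRu : R ^ 2 / u = u * s := by rw [hs_def]; field_simp
  have hR0 : 0 < R := hu.trans_le huR
  have hσ_sq : σ ^ 2 = R ^ 2 / (n + 1) := by rw [hR]; field_simp
  have hexp : -(u * s) ^ 2 / (2 * σ ^ 2) =
      -u ^ 2 / (2 * σ ^ 2) + -((n + 1 : ℕ) * ((s - s⁻¹) / 2)) := by
    rw [hσ_sq, hs_def]; push_cast; field_simp; ring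
  calc R ^ 2 / u ^ 2 * ((R ^ 2 / u) ^ n * exp (-(R ^ 2 / u) ^ 2 / (2 * σ ^ 2)))
      = u ^ n * exp (-u ^ 2 / (2 * σ ^ 2)) *
          (s ^ (n + 1) * exp (-((n + 1 : ℕ) * ((s - s⁻¹) / 2)))) := by
        rw [hRu, hexp, exp_add, mul_pow, pow_succ]; ring
    _ ≤ u ^ n * exp (-u ^ 2 / (2 * σ ^ 2)) * 1 := by
        gcongr
        rw [exp_neg, ← div_eq_mul_inv, div_le_one (exp_pos _)]
        exact pow_le_exp_mul_half_sub_inv (n + 1) hs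
    _ = u ^ n * exp (-u ^ 2 / (2 * σ ^ 2)) := mul_one _

theorem image_sq_div_Ioo_eq_Ioi {R : ℝ} (hR : 0 < R) : (R ^ 2 / ·) '' Ioo 0 R = Ioi R := by
  ext r
  constructor
  · rintro ⟨u, ⟨hu0, huR⟩, rfl⟩
    rw [mem_Ioi, lt_div_iff₀ hu0]
    nlinarith
  · intro (hr : R < r)
    have hr0 : 0 < r := hR.trans hr
    refine ⟨R ^ 2 / r, ⟨by positivity, ?_⟩, by field_simp⟩
    rw [div_lt_iff₀ hr0]
    nlinarith

theorem setIntegral_Ioi_le_setIntegral_Ioc_of_inversion {g : ℝ → ℝ} {R : ℝ} (hR : 0 < R)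
    (hg : Continuous g) (hg_nonneg : ∀ r ∈ Ioi R, 0 ≤ g r)
    (hinv : ∀ u ∈ Ioo 0 R, R ^ 2 / u ^ 2 * g (R ^ 2 / u) ≤ g u) :
    ∫ r in Ioi R, g r ≤ ∫ r in Ioc 0 R, g r := by
  have hderiv : ∀ u ∈ Ioo 0 R, HasDerivWithinAt (R ^ 2 / ·) (-(R ^ 2 / u ^ 2)) (Ioo 0 R) u :=
    fun u hu ↦ by
      simpa [div_eq_mul_inv, neg_div] using
        ((hasDerivAt_inv hu.1.ne').const_mul (R ^ 2)).hasDerivWithinAt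
  have hinj : InjOn (R ^ 2 / ·) (Ioo 0 R) := fun a ha b hb hab ↦ by
    have := ha.1.ne'; have := hb.1.ne'
    field_simp at hab
    linarith
  rw [← image_sq_div_Ioo_eq_Ioi hR, integral_image_eq_integral_abs_deriv_smul measurableSet_Ioo
    hderiv hinj, integral_Ioc_eq_integral_Ioo]
  have hweight : ∀ u ∈ Ioo 0 R,
      |-(R ^ 2 / u ^ 2)| • g (R ^ 2 / u) = R ^ 2 / u ^ 2 * g (R ^ 2 / u) :=
    fun u hu ↦ by rw [abs_neg, abs_of_pos (by have := hu.1; positivity), smul_eq_mul]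
  rw [setIntegral_congr_fun measurableSet_Ioo hweight]
  have hg_int : IntegrableOn g (Ioo 0 R) := hg.integrableOn_Icc.mono_set Ioo_subset_Icc_self
  refine setIntegral_mono_on (Integrable.mono' hg_int ?_ ?_) hg_int measurableSet_Ioo hinv
  · have hinv_cont : ContinuousOn (fun u : ℝ ↦ R ^ 2 / u) (Ioo 0 R) :=
      continuousOn_const.div continuousOn_id fun u hu ↦ hu.1.ne'
    refine ContinuousOn.aestronglyMeasurable ?_ measurableSet_Ioo
    exact (continuousOn_const.div (continuousOn_pow 2) fun u hu ↦ pow_ne_zero 2 hu.1.ne').mul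
      (hg.comp_continuousOn hinv_cont)
  · filter_upwards [ae_restrict_mem measurableSet_Ioo] with u hu
    have hu0 := hu.1
    have hmem : R ^ 2 / u ∈ Ioi R := image_sq_div_Ioo_eq_Ioi hR ▸ mem_image_of_mem _ hu
    rw [norm_of_nonneg (mul_nonneg (by positivity) (hg_nonneg _ hmem))]
    exact hinv u hu

section Polar

variable {E F : Type*} [NormedAddCommGroup E] [NormedSpace ℝ E] [FiniteDimensional ℝ E]
  [Nontrivial E] [MeasurableSpace E] [BorelSpace E] [NormedAddCommGroup F] [NormedSpace ℝ F]

theorem setIntegral_fun_norm_addHaar (μ : Measure E) [μ.IsAddHaarMeasure] (f : ℝ → F)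
    {s : Set ℝ} (hs : MeasurableSet s) :
    ∫ x in (‖·‖) ⁻¹' s, f ‖x‖ ∂μ =
      finrank ℝ E • μ.real (ball 0 1) • ∫ y in Ioi 0 ∩ s, y ^ (finrank ℝ E - 1) • f y := by
  rw [← integral_indicator (hs.preimage measurable_norm)]
  have : ((‖·‖) ⁻¹' s).indicator (fun x : E ↦ f ‖x‖) = fun x ↦ s.indicator f ‖x‖ :=
    funext fun x ↦ indicator_comp_right (g := f) (‖·‖)
  rw [this, integral_fun_norm_addHaar μ, ← setIntegral_indicator hs]
  simp_rw [indicator_smul_apply]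

theorem setIntegral_gaussian_norm_gt_le_norm_le (μ : Measure E) [μ.IsAddHaarMeasure] {σ : ℝ}
    (hσ : 0 < σ) :
    ∫ x in {x : E | σ * √(finrank ℝ E) < ‖x‖}, exp (-‖x‖ ^ 2 / (2 * σ ^ 2)) ∂μ ≤
      ∫ x in {x : E | ‖x‖ ≤ σ * √(finrank ℝ E)}, exp (-‖x‖ ^ 2 / (2 * σ ^ 2)) ∂μ := by
  obtain ⟨n, hn⟩ : ∃ n, finrank ℝ E = n + 1 := Nat.exists_eq_add_one.mpr finrank_pos
  set R := σ * √(finrank ℝ E)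
  have hR0 : 0 < R := by
    have : (0 : ℝ) < finrank ℝ E := Nat.cast_pos.mpr finrank_pos
    positivity
  have hR : R ^ 2 = (n + 1) * σ ^ 2 := by
    rw [mul_pow, sq_sqrt (Nat.cast_nonneg _), hn]; push_cast; ring
  change ∫ x in (‖·‖) ⁻¹' Ioi R, _ ∂μ ≤ ∫ x in (‖·‖) ⁻¹' Iic R, _ ∂μ
  have hpolar {s : Set ℝ} (hs : MeasurableSet s) :=
    setIntegral_fun_norm_addHaar μ (fun r ↦ exp (-r ^ 2 / (2 * σ ^ 2))) hs
  rw [hpolar measurableSet_Ioi, hpolar measurableSet_Iic, Ioi_inter_Ioi, max_eq_right hR0.le,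
    Ioi_inter_Iic, hn, Nat.add_sub_cancel]
  simp only [nsmul_eq_mul, smul_eq_mul]
  gcongr _ * (_ * ?_)
  exact setIntegral_Ioi_le_setIntegral_Ioc_of_inversion
    (g := fun r ↦ r ^ n * exp (-r ^ 2 / (2 * σ ^ 2))) hR0 (by fun_prop)
    (fun r hr ↦ by have := hR0.trans hr; positivity)
    (fun u hu ↦ radial_gaussian_inversion_le n hR hu.1 hu.2.le)

end Polar

section Gaussian

variable {V : Type*} [NormedAddCommGroup V] [InnerProductSpace ℝ V] [FiniteDimensional ℝ V]
  [MeasurableSpace V] [BorelSpace V]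

theorem integral_exp_neg_sq_norm_div {σ : ℝ} (hσ : 0 < σ) :
    ∫ v : V, exp (-‖v‖ ^ 2 / (2 * σ ^ 2)) = (2 * π) ^ (finrank ℝ V / 2 : ℝ) * σ ^ finrank ℝ V := by
  have hb : 0 < (2 * σ ^ 2)⁻¹ := by positivity
  have hform : (fun v : V ↦ exp (-‖v‖ ^ 2 / (2 * σ ^ 2))) =
      fun v ↦ exp (-(2 * σ ^ 2)⁻¹ * ‖v‖ ^ 2) := by
    ext; ring_nf
  have hσ_pow : (σ ^ 2) ^ (finrank ℝ V / 2 : ℝ) = σ ^ finrank ℝ V := by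
    rw [← rpow_natCast σ 2, ← rpow_mul hσ.le, ← rpow_natCast σ]
    congr 1
    push_cast
    ring
  rw [hform, GaussianFourier.integral_rexp_neg_mul_sq_norm hb, div_inv_eq_mul, ← mul_assoc,
    mul_comm π, mul_rpow (by positivity) (by positivity), hσ_pow]

theorem integral_gaussian_le_two_mul_setIntegral_norm_le [Nontrivial V] {σ : ℝ} (hσ : 0 < σ) :
    ∫ v : V, exp (-‖v‖ ^ 2 / (2 * σ ^ 2)) ≤
      2 * ∫ v in {v : V | ‖v‖ ≤ σ * √(finrank ℝ V)}, exp (-‖v‖ ^ 2 / (2 * σ ^ 2)) := by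
  have hint : Integrable (fun v : V ↦ exp (-‖v‖ ^ 2 / (2 * σ ^ 2))) :=
    .of_integral_ne_zero (by rw [integral_exp_neg_sq_norm_div hσ]; positivity)
  have hball : MeasurableSet {v : V | ‖v‖ ≤ σ * √(finrank ℝ V)} :=
    measurableSet_le measurable_norm measurable_const
  have hcompl : {v : V | ‖v‖ ≤ σ * √(finrank ℝ V)}ᶜ = {v | σ * √(finrank ℝ V) < ‖v‖} := by
    ext; simp
  rw [← integral_add_compl hball hint, hcompl]
  linarith [setIntegral_gaussian_norm_gt_le_norm_le (volume : Measure V) hσ]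

end Gaussian

/-- Gaussian median bound: for a standard Gaussian vector `G` in
`ℝ^d` (`d ≥ 1`), `P(|G|² ≤ d) ≥ 1/2` (the median of `χ²_d` is at most `d`);
equivalently, for every `σ > 0`,
`∫_{|u| ≤ σ√d} exp(−|u|²/(2σ²)) du ≥ (1/2)(2π)^{d/2} σ^d`. -/
theorem gaussian_ball_mass_at_least_half
    (d : ℕ) (hd : 1 ≤ d) :
    ((volume.withDensity fun u : EuclideanSpace ℝ (Fin d) =>
        ENNReal.ofReal ((2 * Real.pi) ^ (-(d : ℝ) / 2) * Real.exp (-‖u‖ ^ 2 / 2)))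
      {u : EuclideanSpace ℝ (Fin d) | ‖u‖ ^ 2 ≤ (d : ℝ)} ≥ 1 / 2) ∧
    ∀ σ : ℝ, 0 < σ →
      (1 / 2) * (2 * Real.pi) ^ ((d : ℝ) / 2) * σ ^ (d : ℕ) ≤
        ∫ u in {u : EuclideanSpace ℝ (Fin d) | ‖u‖ ≤ σ * Real.sqrt d},
          Real.exp (-‖u‖ ^ 2 / (2 * σ ^ 2)) := by
  have : Nonempty (Fin d) := ⟨⟨0, hd⟩⟩
  have hball (σ : ℝ) (hσ : 0 < σ) :
      (1 / 2) * (2 * π) ^ ((d : ℝ) / 2) * σ ^ d ≤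
        ∫ u in {u : EuclideanSpace ℝ (Fin d) | ‖u‖ ≤ σ * √d}, exp (-‖u‖ ^ 2 / (2 * σ ^ 2)) := by
    have := integral_gaussian_le_two_mul_setIntegral_norm_le (V := EuclideanSpace ℝ (Fin d)) hσ
    rw [integral_exp_neg_sq_norm_div hσ, finrank_euclideanSpace_fin] at this
    linarith
  refine ⟨?_, hball⟩
  have hS : {u : EuclideanSpace ℝ (Fin d) | ‖u‖ ^ 2 ≤ d} = {u | ‖u‖ ≤ 1 * √d} := by
    ext u
    simp only [mem_ofPred_eq, one_mul, le_sqrt (norm_nonneg u) (Nat.cast_nonneg d)]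
  have hmass : (1 : ℝ) / 2 ≤ ∫ u in {u : EuclideanSpace ℝ (Fin d) | ‖u‖ ^ 2 ≤ d},
      (2 * π) ^ (-(d : ℝ) / 2) * exp (-‖u‖ ^ 2 / 2) := by
    have hpos : 0 < (2 * π) ^ ((d : ℝ) / 2) := by positivity
    have h1 := hball 1 one_pos
    simp only [one_pow, mul_one] at h1
    rw [integral_const_mul, hS, neg_div, rpow_neg (by positivity), le_inv_mul_iff₀ hpos]
    linarith
  have hint := Integrable.of_integral_ne_zero ((one_half_pos.trans_le hmass).ne')
  rw [ge_iff_le, withDensity_apply _ (measurableSet_le (by fun_prop) measurable_const),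
    ← ofReal_integral_eq_lintegral_ofReal hint (.of_forall fun u ↦ by positivity)]
  simpa using ENNReal.ofReal_le_ofReal hmass
end

section
/- Let Z ⊂ ℝ^d be nonempty and compact, satisfying the uniform local volume condition: there exist constants v_∧ ∈ (0,1] and σ_∨ > 0 such that Leb({u ∈ Z : |z−u| ≤ r}) ≥ v_∧ V_d(r) for every z ∈ Z and every r ∈ (0, σ_∨ √d]. Let μ_b be a probability measure on Z absolutely continuous with respect to Lebesgue measure with density p_b ≥ p_ > 0 Lebesgue-almost everywhere on Z. Then for every σ ∈ (0, σ_∨], inf_{z∈Z} ∫_Z exp(−|z−u|²/(2σ²)) μ_b(du) ≥ (1/2) p_ v_∧ (2π)^{d/2} σ^d. -/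
open MeasureTheory Set Real Metric

/-! By the layer-cake formula and the substitution `t = e^{-s}`,
`∫_Z exp (-|z-u|²/(2σ²)) du = ∫_0^∞ e^{-s} Leb (Z ∩ B(z, σ √(2s))) ds`. Shrinking the radius to
`σ √(2 min(s, d/2)) ≤ σ √d` brings it into the range of the volume condition, so the integral is
at least `v_∧ π^{d/2} (2σ²)^{d/2} / Γ(d/2+1) · ∫_0^∞ e^{-s} min(s, d/2)^{d/2} ds`. With `a = d/2`,
integration by parts turns the last integral into `a ∫_0^a e^{-t} t^{a-1} dt`, which is at least
`a Γ(a)/2 = Γ(a+1)/2` because the median of the Gamma(a) distribution is at most `a`: the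
substitutions `t = a e^{±x}` compare the mass on either side of `a` through `2x ≤ e^x - e^{-x}`.
Finally `p_b ≥ p_` transfers the bound from Lebesgue measure on `Z` to `μ_b`. -/

lemma integral_Ioi_le_integral_Ioc_exp_neg_mul_rpow {a : ℝ} (ha : 0 < a) :
    ∫ t in Ioi a, exp (-t) * t ^ (a - 1) ≤ ∫ t in Ioc 0 a, exp (-t) * t ^ (a - 1) := by
  set g : ℝ → ℝ := fun t => exp (-t) * t ^ (a - 1)
  set φ : ℝ → ℝ := fun x => a * exp x
  have hφ : ∀ s : Set ℝ, ∀ x ∈ s, HasDerivWithinAt φ (φ x) s x := fun s x _ =>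
    ((hasDerivAt_exp x).const_mul a).hasDerivWithinAt
  have hφinj : ∀ s : Set ℝ, InjOn φ s := fun s =>
    ((mul_right_injective₀ ha.ne').comp exp_injective).injOn
  have hφIic : φ '' Iic 0 = Ioc 0 a := by
    simp [φ, ← image_image (a * ·) exp, image_mul_left_Ioc ha]
  have hφIoi : φ '' Ioi 0 = Ioi a := by
    simp [φ, ← image_image (a * ·) exp, image_mul_left_Ioi ha]
  set h : ℝ → ℝ := fun x => |φ x| • g (φ x)
  have h_eq : ∀ x, h x = a ^ a * exp (a * (x - exp x)) := by
    intro x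
    have hφx : 0 < φ x := by positivity
    have hpow : φ x * φ x ^ (a - 1) = a ^ a * exp (a * x) := by
      rw [mul_comm, ← rpow_add_one hφx.ne', sub_add_cancel, mul_rpow ha.le (exp_pos x).le,
        ← exp_mul, mul_comm x]
    simp only [h, g, abs_of_pos hφx, smul_eq_mul, mul_left_comm (φ x), hpow]
    rw [mul_left_comm, ← exp_add]
    simp only [φ]
    ring_nf
  have h_le : ∀ x ≤ 0, h (-x) ≤ h x := by
    intro x hx
    have hsinh : -x ≤ sinh (-x) := self_le_sinh_iff.2 (neg_nonneg.2 hx)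
    rw [sinh_eq, neg_neg] at hsinh
    rw [h_eq, h_eq]
    gcongr a ^ a * exp (a * ?_)
    linarith
  have hleft : ∫ t in Ioc 0 a, g t = ∫ x in Iic 0, h x := by
    rw [← hφIic, integral_image_eq_integral_abs_deriv_smul measurableSet_Iic (hφ _) (hφinj _)]
  have hright : ∫ t in Ioi a, g t = ∫ x in Iic 0, h (-x) := by
    rw [← hφIoi, integral_image_eq_integral_abs_deriv_smul measurableSet_Ioi (hφ _) (hφinj _),
      integral_comp_neg_Iic, neg_zero]
  have hint : IntegrableOn h (Iic 0) := by
    rw [← integrableOn_image_iff_integrableOn_abs_deriv_smul measurableSet_Iic (hφ _) (hφinj _),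
      hφIic]
    exact (GammaIntegral_convergent ha).mono_set Ioc_subset_Ioi_self
  rw [hleft, hright]
  refine integral_mono_of_nonneg (Filter.Eventually.of_forall fun x => ?_) hint
    ((ae_restrict_iff' measurableSet_Iic).2 (Filter.Eventually.of_forall h_le))
  show 0 ≤ h (-x)
  rw [h_eq]
  positivity

lemma Gamma_div_two_le_integral_Ioc {a : ℝ} (ha : 0 < a) :
    Gamma a / 2 ≤ ∫ t in Ioc 0 a, exp (-t) * t ^ (a - 1) := by
  have hsplit := setIntegral_union (Ioc_disjoint_Ioi le_rfl) measurableSet_Ioi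
    ((GammaIntegral_convergent ha).mono_set Ioc_subset_Ioi_self)
    ((GammaIntegral_convergent ha).mono_set (Ioi_subset_Ioi ha.le))
  rw [Ioc_union_Ioi_eq_Ioi ha.le, ← Gamma_eq_integral ha] at hsplit
  linarith [integral_Ioi_le_integral_Ioc_exp_neg_mul_rpow ha]

lemma integral_exp_neg_mul_rpow_by_parts {a : ℝ} (ha : 0 < a) (b : ℝ) :
    ∫ t in 0..b, exp (-t) * t ^ a
      = a * (∫ t in 0..b, exp (-t) * t ^ (a - 1)) - exp (-b) * b ^ a := by
  have hne : ∀ t ∈ Ioo (min 0 b) (max 0 b), t ≠ 0 := by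
    rintro t ⟨h₁, h₂⟩ rfl
    rw [min_lt_iff] at h₁
    rw [lt_max_iff] at h₂
    rcases h₁ with h₁ | h₁ <;> rcases h₂ with h₂ | h₂ <;> linarith
  have hparts := intervalIntegral.integral_mul_deriv_eq_deriv_mul_of_hasDerivAt
    (u := fun t => t ^ a) (v := fun t => -exp (-t)) (u' := fun t => a * t ^ (a - 1))
    (v' := fun t => exp (-t))
    (fun t _ => (continuousAt_rpow_const t a (Or.inr ha.le)).continuousWithinAt)
    (by fun_prop)
    (fun t ht => hasDerivAt_rpow_const (Or.inl (hne t ht)))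
    (fun t _ => ((hasDerivAt_neg t).exp.neg).congr_deriv (by simp))
    ((intervalIntegral.intervalIntegrable_rpow' (by linarith)).const_mul a)
    ((continuous_exp.comp continuous_neg).intervalIntegrable 0 b)
  simp only [zero_rpow ha.ne', zero_mul, mul_neg, intervalIntegral.integral_neg,
    sub_neg_eq_add, mul_comm (exp _), intervalIntegral.integral_const_mul, mul_assoc] at hparts ⊢
  linarith

lemma integrableOn_exp_neg_mul_min_rpow {a : ℝ} (ha : 0 ≤ a) :
    IntegrableOn (fun s => exp (-s) * min s a ^ a) (Ioi 0) := by
  refine Integrable.mono' ((exp_neg_integrableOn_Ioi 0 one_pos).mul_const (a ^ a))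
    (by fun_prop) ((ae_restrict_iff' measurableSet_Ioi).2 (Filter.Eventually.of_forall ?_))
  intro s hs
  have hmin : 0 ≤ min s a := le_min (le_of_lt hs) ha
  rw [norm_of_nonneg (by positivity), neg_mul, one_mul]
  gcongr
  exact min_le_right _ _

lemma Gamma_add_one_div_two_le_integral_exp_neg_mul_min_rpow {a : ℝ} (ha : 0 < a) :
    Gamma (a + 1) / 2 ≤ ∫ s in Ioi 0, exp (-s) * min s a ^ a := by
  have hint := integrableOn_exp_neg_mul_min_rpow ha.le
  have hhead : ∫ s in Ioc 0 a, exp (-s) * min s a ^ a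
      = a * (∫ t in Ioc 0 a, exp (-t) * t ^ (a - 1)) - exp (-a) * a ^ a := by
    rw [setIntegral_congr_fun measurableSet_Ioc fun s hs => by rw [min_eq_left hs.2],
      ← intervalIntegral.integral_of_le ha.le, ← intervalIntegral.integral_of_le ha.le,
      integral_exp_neg_mul_rpow_by_parts ha]
  have htail : ∫ s in Ioi a, exp (-s) * min s a ^ a = exp (-a) * a ^ a := by
    rw [setIntegral_congr_fun measurableSet_Ioi fun s hs => by rw [min_eq_right (le_of_lt hs)],
      integral_mul_const, integral_exp_neg_Ioi]
  rw [← Ioc_union_Ioi_eq_Ioi ha.le, setIntegral_union (Ioc_disjoint_Ioi le_rfl) measurableSet_Ioi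
    (hint.mono_set Ioc_subset_Ioi_self) (hint.mono_set (Ioi_subset_Ioi ha.le)), hhead, htail,
    Gamma_add_one ha.ne']
  have := mul_le_mul_of_nonneg_left (Gamma_div_two_le_integral_Ioc ha) ha.le
  linarith

lemma ofReal_le_lintegral_exp_neg_dist_sq_of_measure_closedBall {X : Type*} [PseudoMetricSpace X]
    [MeasurableSpace X] [OpensMeasurableSpace X] (μ : Measure X) (z : X) {d : ℕ} (hd : 0 < d)
    {c σ : ℝ} (hc : 0 ≤ c) (hσ : 0 < σ)
    (hball : ∀ r, 0 < r → r ≤ σ * √d → ENNReal.ofReal (c * r ^ d) ≤ μ (closedBall z r)) :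
    ENNReal.ofReal (c * (2 * σ ^ 2) ^ ((d : ℝ) / 2) * (Gamma ((d : ℝ) / 2 + 1) / 2))
      ≤ ∫⁻ u, ENNReal.ofReal (exp (-dist z u ^ 2 / (2 * σ ^ 2))) ∂μ := by
  set a : ℝ := (d : ℝ) / 2
  have ha : 0 < a := by positivity
  set f : X → ℝ := fun u => exp (-dist z u ^ 2 / (2 * σ ^ 2))
  set K : ℝ := c * (2 * σ ^ 2) ^ a
  -- `{exp (-s) ≤ f}` is the closed ball of radius `σ √(2s)`; we only use the smaller radius
  -- `σ √(2 min s a) ≤ σ √d`, where the volume bound applies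
  have hlevel : ∀ s > 0, ENNReal.ofReal (K * (exp (-s) * min s a ^ a))
      ≤ ENNReal.ofReal |-exp (-s)| * μ {u | exp (-s) ≤ f u} := by
    intro s hs
    have hm : 0 < min s a := lt_min hs ha
    set r := √(2 * σ ^ 2 * min s a) with hr_def
    have hr : 0 < r := by positivity
    have hrσ : r ≤ σ * √d := by
      have : 2 * min s a ≤ d := by
        linarith [min_le_right s a, show 2 * a = d by simp only [a]; ring]
      rw [← sqrt_sq hσ.le, ← sqrt_mul (sq_nonneg σ)]
      exact sqrt_le_sqrt (by nlinarith [sq_nonneg σ])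
    have hball_sub : closedBall z r ⊆ {u | exp (-s) ≤ f u} := by
      intro u hu
      have hdist : dist z u ^ 2 ≤ 2 * σ ^ 2 * s := by
        calc dist z u ^ 2 ≤ r ^ 2 := by gcongr; rw [dist_comm]; exact hu
          _ = 2 * σ ^ 2 * min s a := sq_sqrt (by positivity)
          _ ≤ 2 * σ ^ 2 * s := by gcongr; exact min_le_left s a
      show exp (-s) ≤ exp (-dist z u ^ 2 / (2 * σ ^ 2))
      gcongr
      rw [le_div_iff₀ (by positivity)]
      linarith
    have hrd : c * r ^ d = K * min s a ^ a := by
      have hpow : r ^ d = (2 * σ ^ 2 * min s a) ^ a := by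
        rw [hr_def, sqrt_eq_rpow, ← rpow_natCast, ← rpow_mul (by positivity), one_div_mul_eq_div]
      rw [hpow, mul_rpow (by positivity) hm.le, ← mul_assoc]
    rw [abs_neg, abs_of_pos (exp_pos _), mul_left_comm, ENNReal.ofReal_mul (exp_pos _).le, ← hrd]
    gcongr
    exact (hball r hr hrσ).trans (measure_mono hball_sub)
  have hsubst : (fun s : ℝ => exp (-s)) '' Ioi 0 = Ioo 0 1 := by
    simp [← image_image exp (- ·)]
  calc ENNReal.ofReal (K * (Gamma (a + 1) / 2))
      ≤ ENNReal.ofReal (∫ s in Ioi 0, K * (exp (-s) * min s a ^ a)) := by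
        rw [integral_const_mul]
        gcongr
        exact Gamma_add_one_div_two_le_integral_exp_neg_mul_min_rpow ha
    _ = ∫⁻ s in Ioi 0, ENNReal.ofReal (K * (exp (-s) * min s a ^ a)) :=
        ofReal_integral_eq_lintegral_ofReal ((integrableOn_exp_neg_mul_min_rpow ha.le).const_mul K)
          ((ae_restrict_iff' measurableSet_Ioi).2 (Filter.Eventually.of_forall fun s hs => by
            have : 0 ≤ min s a := le_min (le_of_lt hs) ha.le
            positivity))
    _ ≤ ∫⁻ s in Ioi 0, ENNReal.ofReal |-exp (-s)| * μ {u | exp (-s) ≤ f u} :=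
        setLIntegral_mono' measurableSet_Ioi hlevel
    _ = ∫⁻ t in Ioo 0 1, μ {u | t ≤ f u} := by
        rw [← hsubst, lintegral_image_eq_lintegral_abs_deriv_mul (f' := fun s => -exp (-s))
          measurableSet_Ioi
          (fun s _ => ((hasDerivAt_neg s).exp.congr_deriv (by simp)).hasDerivWithinAt)
          (fun x _ y _ h => neg_injective (exp_injective h))]
    _ ≤ ∫⁻ t in Ioi 0, μ {u | t ≤ f u} := lintegral_mono_set Ioo_subset_Ioi_self
    _ = ∫⁻ u, ENNReal.ofReal (f u) ∂μ :=
        (lintegral_eq_lintegral_meas_le μ (Filter.Eventually.of_forall fun u => (exp_pos _).le)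
          (by fun_prop)).symm

lemma volume_univ_euclideanSpace_fin_zero :
    volume (univ : Set (EuclideanSpace ℝ (Fin 0))) = 1 := by
  have h := (EuclideanSpace.volume_preserving_symm_measurableEquiv_toLp (Fin 0)).measure_preimage
    (s := univ) MeasurableSet.univ.nullMeasurableSet
  rw [preimage_univ] at h
  rw [h, volume_pi, Measure.pi_of_empty, Measure.dirac_apply_of_mem (mem_univ _)]

lemma ofReal_le_setLIntegral_exp_neg_dist_sq {d : ℕ} {Z : Set (EuclideanSpace ℝ (Fin d))}
    {vmin σ : ℝ} (hv0 : 0 ≤ vmin) (hv1 : vmin ≤ 1) (hσ : 0 < σ) {z : EuclideanSpace ℝ (Fin d)}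
    (hz : z ∈ Z)
    (hvol : ∀ r : ℝ, 0 < r → r ≤ σ * √d →
      ENNReal.ofReal (vmin * (π ^ ((d : ℝ) / 2) * r ^ d / Gamma ((d : ℝ) / 2 + 1))) ≤
        volume {u | u ∈ Z ∧ dist z u ≤ r}) :
    ENNReal.ofReal ((1 / 2) * vmin * (2 * π) ^ ((d : ℝ) / 2) * σ ^ d)
      ≤ ∫⁻ u in Z, ENNReal.ofReal (exp (-dist z u ^ 2 / (2 * σ ^ 2))) := by
  rcases Nat.eq_zero_or_pos d with rfl | hd
  · have hZ : Z = univ := eq_univ_of_forall fun u => Subsingleton.elim z u ▸ hz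
    have hone : ∀ u, ENNReal.ofReal (exp (-dist z u ^ 2 / (2 * σ ^ 2))) = 1 := fun u => by
      simp [Subsingleton.elim u z]
    simp only [hZ, Measure.restrict_univ, hone, lintegral_one,
      volume_univ_euclideanSpace_fin_zero, CharP.cast_eq_zero, zero_div, rpow_zero, pow_zero,
      mul_one]
    exact ENNReal.ofReal_le_one.2 (by linarith)
  · have hball : ∀ r, 0 < r → r ≤ σ * √d →
        ENNReal.ofReal (vmin * π ^ ((d : ℝ) / 2) / Gamma ((d : ℝ) / 2 + 1) * r ^ d)
          ≤ volume.restrict Z (closedBall z r) := by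
      intro r hr hrσ
      rw [Measure.restrict_apply measurableSet_closedBall]
      convert hvol r hr hrσ using 2
      · ring
      · ext u
        simp [dist_comm, and_comm]
    convert ofReal_le_lintegral_exp_neg_dist_sq_of_measure_closedBall (volume.restrict Z) z hd
      (by positivity) hσ hball using 2
    have hσd : (2 * σ ^ 2) ^ ((d : ℝ) / 2) = 2 ^ ((d : ℝ) / 2) * σ ^ d := by
      rw [mul_rpow zero_le_two (sq_nonneg σ), ← rpow_natCast σ 2, ← rpow_mul hσ.le,
        Nat.cast_ofNat, mul_div_cancel₀ _ two_ne_zero, rpow_natCast]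
    rw [hσd, mul_rpow zero_le_two pi_pos.le]
    field_simp

theorem denominator_uniform_lower_bound_general
    {d : ℕ} (Z : Set (EuclideanSpace ℝ (Fin d)))
    (vmin σmax : ℝ) (hv0 : 0 < vmin) (hv1 : vmin ≤ 1)
    (hvol : ∀ z ∈ Z, ∀ r : ℝ, 0 < r → r ≤ σmax * Real.sqrt d →
      ENNReal.ofReal (vmin *
          (Real.pi ^ ((d : ℝ) / 2) * r ^ (d : ℕ) / Real.Gamma ((d : ℝ) / 2 + 1))) ≤
        volume {u : EuclideanSpace ℝ (Fin d) | u ∈ Z ∧ dist z u ≤ r})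
    (μb : Measure (EuclideanSpace ℝ (Fin d))) [IsProbabilityMeasure μb]
    (pb : EuclideanSpace ℝ (Fin d) → ℝ)
    (hμb : μb = (volume.restrict Z).withDensity fun u => ENNReal.ofReal (pb u))
    (plow : ℝ) (hplow : 0 < plow)
    (hpb : ∀ᵐ u ∂volume.restrict Z, plow ≤ pb u) :
    ∀ σ : ℝ, 0 < σ → σ ≤ σmax → ∀ z ∈ Z,
      (1 / 2) * plow * vmin * (2 * Real.pi) ^ ((d : ℝ) / 2) * σ ^ (d : ℕ) ≤
        ∫ u, Real.exp (-dist z u ^ 2 / (2 * σ ^ 2)) ∂μb := by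
  intro σ hσ hσle z hz
  have hZ := ofReal_le_setLIntegral_exp_neg_dist_sq hv0.le hv1 hσ hz
    fun r hr hrσ => hvol z hz r hr (hrσ.trans (by gcongr))
  have hdens : ENNReal.ofReal plow • volume.restrict Z ≤ μb := by
    rw [hμb, ← withDensity_const]
    exact withDensity_mono (hpb.mono fun u hu => ENNReal.ofReal_le_ofReal hu)
  have hint : Integrable (fun u => exp (-dist z u ^ 2 / (2 * σ ^ 2))) μb := by
    refine Integrable.of_bound (by fun_prop) 1 (ae_of_all _ fun u => ?_)
    rw [norm_of_nonneg (exp_pos _).le, exp_le_one_iff]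
    exact div_nonpos_of_nonpos_of_nonneg (neg_nonpos.2 (sq_nonneg _)) (by positivity)
  rw [← ENNReal.ofReal_le_ofReal_iff (integral_nonneg fun u => (exp_pos _).le),
    ofReal_integral_eq_lintegral_ofReal hint (ae_of_all _ fun u => (exp_pos _).le)]
  set F := fun u => ENNReal.ofReal (exp (-dist z u ^ 2 / (2 * σ ^ 2)))
  calc ENNReal.ofReal ((1 / 2) * plow * vmin * (2 * π) ^ ((d : ℝ) / 2) * σ ^ d)
      = ENNReal.ofReal plow
          * ENNReal.ofReal ((1 / 2) * vmin * (2 * π) ^ ((d : ℝ) / 2) * σ ^ d) := by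
        rw [← ENNReal.ofReal_mul hplow.le]
        ring_nf
    _ ≤ ENNReal.ofReal plow * ∫⁻ u in Z, F u := by gcongr
    _ = ∫⁻ u, F u ∂(ENNReal.ofReal plow • volume.restrict Z) := by
        rw [lintegral_smul_measure, smul_eq_mul]
    _ ≤ ∫⁻ u, F u ∂μb := lintegral_mono' hdens le_rfl

/-- uniform lower bound on the smoothing denominator: under the
uniform local volume condition on `Z ⊂ ℝ^d` and a density lower bound
`p_b ≥ p_ > 0` for `μ_b`, for every `σ ∈ (0, σ_∨]`,
`inf_{z∈Z} ∫_Z exp(−|z−u|²/(2σ²)) μ_b(du) ≥ (1/2) p_ v_∧ (2π)^{d/2} σ^d`. -/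
theorem denominator_uniform_lower_bound
    {d : ℕ} (Z : Set (EuclideanSpace ℝ (Fin d)))
    (hZne : Z.Nonempty) (hZc : IsCompact Z)
    (vmin σmax : ℝ) (hv0 : 0 < vmin) (hv1 : vmin ≤ 1) (hσmax : 0 < σmax)
    (hvol : ∀ z ∈ Z, ∀ r : ℝ, 0 < r → r ≤ σmax * Real.sqrt d →
      ENNReal.ofReal (vmin *
          (Real.pi ^ ((d : ℝ) / 2) * r ^ (d : ℕ) / Real.Gamma ((d : ℝ) / 2 + 1))) ≤
        volume {u : EuclideanSpace ℝ (Fin d) | u ∈ Z ∧ dist z u ≤ r})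
    (μb : Measure (EuclideanSpace ℝ (Fin d))) [IsProbabilityMeasure μb]
    (pb : EuclideanSpace ℝ (Fin d) → ℝ)
    (hμb : μb = (volume.restrict Z).withDensity fun u => ENNReal.ofReal (pb u))
    (plow : ℝ) (hplow : 0 < plow)
    (hpb : ∀ᵐ u ∂volume.restrict Z, plow ≤ pb u) :
    ∀ σ : ℝ, 0 < σ → σ ≤ σmax → ∀ z ∈ Z,
      (1 / 2) * plow * vmin * (2 * Real.pi) ^ ((d : ℝ) / 2) * σ ^ (d : ℕ) ≤
        ∫ u, Real.exp (-dist z u ^ 2 / (2 * σ ^ 2)) ∂μb :=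
  denominator_uniform_lower_bound_general Z vmin σmax hv0 hv1 hvol μb pb hμb plow hplow hpb
end
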